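/- arXiv:2601.18249 — 8 statements merged into one kernel-verified Lean document; each statement's English description precedes it below -/
import Mathlib

section
/- Let 𝕜 be a field of characteristic zero. Let B be a Poisson 𝕜-algebra which is an integral domain, integrally closed in its field of fractions, and Dixmier. Let A ⊆ B be a Poisson subalgebra (a 𝕜-subalgebra closed under the bracket) such that the quotient vector space B/A is finite-dimensional over 𝕜, and such that for every b ∈ B there exist a, s ∈ A with s ≠ 0 and b·s = a (i.e. B ⊆ Q(A) inside Q(B)). Then A is Dixmier: every injective Poisson 𝕜-algebra endomorphism of A is bijective. -/
open scoped TensorProduct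

/-- A Poisson bracket on a commutative algebra `A` over `𝕜`: a bilinear, antisymmetric
bracket satisfying the Jacobi identity and the Leibniz rule. -/
structure PoissonStructure (𝕜 A : Type*) [CommRing 𝕜] [CommRing A] [Algebra 𝕜 A] where
  bracket : A → A → A
  add_left : ∀ a b c : A, bracket (a + b) c = bracket a c + bracket b c
  smul_left : ∀ (r : 𝕜) (a b : A), bracket (r • a) b = r • bracket a b
  antisymm : ∀ a b : A, bracket a b = - bracket b a
  jacobi : ∀ a b c : A,
    bracket a (bracket b c) + bracket b (bracket c a) + bracket c (bracket a b) = 0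
  leibniz : ∀ a b c : A, bracket a (b * c) = bracket a b * c + b * bracket a c

/-- `f` is a morphism of Poisson algebras. -/
def IsPoissonHom {𝕜 A B : Type*} [CommRing 𝕜] [CommRing A] [CommRing B]
    [Algebra 𝕜 A] [Algebra 𝕜 B]
    (PA : PoissonStructure 𝕜 A) (PB : PoissonStructure 𝕜 B) (f : A →ₐ[𝕜] B) : Prop :=
  ∀ a b : A, f (PA.bracket a b) = PB.bracket (f a) (f b)

/-- A Poisson algebra is Dixmier if every injective Poisson endomorphism is bijective. -/
def IsDixmier (𝕜 A : Type*) [CommRing 𝕜] [CommRing A] [Algebra 𝕜 A]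
    (PA : PoissonStructure 𝕜 A) : Prop :=
  ∀ f : A →ₐ[𝕜] A, IsPoissonHom PA PA f → Function.Injective f → Function.Bijective f

/-- The tensor-product Poisson bracket on `A ⊗[𝕜] B`. -/
def IsTensorBracket {𝕜 A B : Type*} [CommRing 𝕜] [CommRing A] [CommRing B]
    [Algebra 𝕜 A] [Algebra 𝕜 B] (PA : PoissonStructure 𝕜 A) (PB : PoissonStructure 𝕜 B)
    (PT : PoissonStructure 𝕜 (A ⊗[𝕜] B)) : Prop :=
  ∀ (a a' : A) (b b' : B),
    PT.bracket (a ⊗ₜ[𝕜] b) (a' ⊗ₜ[𝕜] b') =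
      PA.bracket a a' ⊗ₜ[𝕜] (b * b') + (a * a') ⊗ₜ[𝕜] PB.bracket b b'

/-- `A` is `R`-Dixmier: every injective Poisson morphism `A → A ⊗ R` has image `A ⊗ 𝕜·1`. -/
def IsRelDixmier (𝕜 A R : Type*) [CommRing 𝕜] [CommRing A] [CommRing R]
    [Algebra 𝕜 A] [Algebra 𝕜 R] (PA : PoissonStructure 𝕜 A)
    (PT : PoissonStructure 𝕜 (A ⊗[𝕜] R)) : Prop :=
  ∀ f : A →ₐ[𝕜] A ⊗[𝕜] R, IsPoissonHom PA PT f → Function.Injective f →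
    Set.range f = Set.range fun a : A => a ⊗ₜ[𝕜] (1 : R)

/-- A Poisson algebra is Poisson simple if its only Poisson ideals are `0` and the whole ring. -/
def IsPoissonSimple {𝕜 A : Type*} [CommRing 𝕜] [CommRing A] [Algebra 𝕜 A]
    (PA : PoissonStructure 𝕜 A) : Prop :=
  ∀ I : Ideal A, (∀ x : A, ∀ y ∈ I, PA.bracket x y ∈ I) → I = ⊥ ∨ I = ⊤

open MvPolynomial in
/-- The Jacobian Poisson bracket with potential `Ω` on `𝕜[x,y,z]`. -/
noncomputable def jacBracket {𝕜 : Type*} [CommRing 𝕜]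
    (Ω f g : MvPolynomial (Fin 3) 𝕜) : MvPolynomial (Fin 3) 𝕜 :=
  Matrix.det (Matrix.of
    ![![pderiv 0 f, pderiv 1 f, pderiv 2 f],
      ![pderiv 0 g, pderiv 1 g, pderiv 2 g],
      ![pderiv 0 Ω, pderiv 1 Ω, pderiv 2 Ω]])

open MvPolynomial in
/-- `Ω` has an isolated singularity at the origin. -/
def HasIsolatedSingularity {𝕜 : Type*} [Field 𝕜] (Ω : MvPolynomial (Fin 3) 𝕜) : Prop :=
  FiniteDimensional 𝕜
    (MvPolynomial (Fin 3) 𝕜 ⧸ Ideal.span {pderiv (0 : Fin 3) Ω, pderiv 1 Ω, pderiv 2 Ω})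

/-- The underlying commutative algebra of `P_{Ω-ξ} = 𝕜[x,y,z]/(Ω-ξ)`. -/
def PQuot (𝕜 : Type*) [CommRing 𝕜] (Ω : MvPolynomial (Fin 3) 𝕜) (ξ : 𝕜) : Type _ :=
  MvPolynomial (Fin 3) 𝕜 ⧸ Ideal.span {Ω - MvPolynomial.C ξ}

noncomputable instance {𝕜 : Type*} [CommRing 𝕜] (Ω : MvPolynomial (Fin 3) 𝕜) (ξ : 𝕜) :
    CommRing (PQuot 𝕜 Ω ξ) :=
  inferInstanceAs (CommRing (MvPolynomial (Fin 3) 𝕜 ⧸ Ideal.span {Ω - MvPolynomial.C ξ}))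

noncomputable instance {𝕜 : Type*} [CommRing 𝕜] (Ω : MvPolynomial (Fin 3) 𝕜) (ξ : 𝕜) :
    Algebra 𝕜 (PQuot 𝕜 Ω ξ) :=
  inferInstanceAs (Algebra 𝕜 (MvPolynomial (Fin 3) 𝕜 ⧸ Ideal.span {Ω - MvPolynomial.C ξ}))

/-- The canonical (surjective) projection `𝕜[x,y,z] → P_{Ω-ξ}`. -/
noncomputable def PQuot.mk {𝕜 : Type*} [CommRing 𝕜] (Ω : MvPolynomial (Fin 3) 𝕜) (ξ : 𝕜)
    (f : MvPolynomial (Fin 3) 𝕜) : PQuot 𝕜 Ω ξ :=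
  Ideal.Quotient.mk (Ideal.span {Ω - MvPolynomial.C ξ}) f

/-- `P` is the Poisson bracket on `P_{Ω-ξ}` induced from the Jacobian bracket on `A_Ω`. -/
def IsInducedBracket {𝕜 : Type*} [CommRing 𝕜] (Ω : MvPolynomial (Fin 3) 𝕜) (ξ : 𝕜)
    (P : PoissonStructure 𝕜 (PQuot 𝕜 Ω ξ)) : Prop :=
  ∀ f g : MvPolynomial (Fin 3) 𝕜,
    P.bracket (PQuot.mk Ω ξ f) (PQuot.mk Ω ξ g) = PQuot.mk Ω ξ (jacBracket Ω f g)

open PiTensorProduct in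
/-- The Poisson bracket on a finite tensor product `⨂[𝕜] i, A i`. -/
def IsPiTensorBracket {𝕜 : Type*} [CommRing 𝕜] {d : ℕ} {A : Fin d → Type*}
    [∀ i, CommRing (A i)] [∀ i, Algebra 𝕜 (A i)]
    (P : ∀ i, PoissonStructure 𝕜 (A i))
    (PT : PoissonStructure 𝕜 (⨂[𝕜] i, A i)) : Prop :=
  ∀ a b : (i : Fin d) → A i,
    PT.bracket (⨂ₜ[𝕜] i, a i) (⨂ₜ[𝕜] i, b i) =
      ∑ i : Fin d,
        ⨂ₜ[𝕜] j, Function.update (fun j => a j * b j) i ((P i).bracket (a i) (b i)) j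

/-- The Poisson-torus bracket associated to a matrix `Λ` on the Laurent polynomial ring
`𝕜[x₁^{±1},…,xₙ^{±1}]`, realized as the group algebra of `ℤⁿ`:
`{x^u, x^v} = (Σ_{i,j} uᵢ λᵢⱼ vⱼ) x^{u+v}`. -/
def IsTorusBracket {𝕜 : Type*} [CommRing 𝕜] (n : ℕ) (Λ : Matrix (Fin n) (Fin n) 𝕜)
    (P : PoissonStructure 𝕜 (AddMonoidAlgebra 𝕜 (Fin n → ℤ))) : Prop :=
  ∀ u v : Fin n → ℤ,
    P.bracket (AddMonoidAlgebra.single u (1 : 𝕜)) (AddMonoidAlgebra.single v (1 : 𝕜)) =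
      (∑ i, ∑ j, (u i : 𝕜) * Λ i j * (v j : 𝕜)) • AddMonoidAlgebra.single (u + v) (1 : 𝕜)

/-- `ν : A → ℤ ∪ {∞}` is a `w`-valuation on the Poisson algebra `A`. -/
structure IsWValuation {𝕜 A : Type*} [CommRing 𝕜] [CommRing A] [Algebra 𝕜 A]
    (P : PoissonStructure 𝕜 A) (w : ℤ) (ν : A → WithTop ℤ) : Prop where
  eq_top_iff : ∀ a : A, ν a = ⊤ ↔ a = 0
  scalar : ∀ c : 𝕜, c ≠ 0 → ν (algebraMap 𝕜 A c) = 0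
  map_mul : ∀ a b : A, ν (a * b) = ν a + ν b
  map_add : ∀ a b : A, min (ν a) (ν b) ≤ ν (a + b)
  map_bracket : ∀ a b : A, ν a + ν b ≤ ν (P.bracket a b) + (w : WithTop ℤ)

lemma PoissonStructure.mul_left' {𝕜 B : Type*} [CommRing 𝕜] [CommRing B] [Algebra 𝕜 B]
    (P : PoissonStructure 𝕜 B) (u v w : B) :
    P.bracket (u * v) w = P.bracket u w * v + u * P.bracket v w := by
  rw [P.antisymm, P.leibniz, P.antisymm w u, P.antisymm w v]; ring

lemma PoissonStructure.keyL {𝕜 B : Type*} [CommRing 𝕜] [CommRing B] [Algebra 𝕜 B]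
    (P : PoissonStructure 𝕜 B) (x y s t : B) :
    s^2*t^2 * P.bracket x y =
      s*t*P.bracket (x*s) (y*t) - (x*s)*t*P.bracket s (y*t)
        - (y*t)*s*P.bracket (x*s) t + (x*s)*(y*t)*P.bracket s t := by
  rw [P.leibniz (x*s) y t, P.mul_left' x s y, P.mul_left' x s t, P.leibniz s y t]; ring

/-- Theorem 0.9: if `B` is an integrally closed Dixmier Poisson domain and `A ⊆ B` is a
cofinite-dimensional Poisson subalgebra with `B ⊆ Q(A)`, then `A` is Dixmier. -/
theorem dixmier_of_cofinite_poissonSubalgebra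
    {𝕜 B : Type*} [Field 𝕜] [CharZero 𝕜]
    [CommRing B] [IsDomain B] [Algebra 𝕜 B] [IsIntegrallyClosed B]
    (PB : PoissonStructure 𝕜 B)
    (hBdix : IsDixmier 𝕜 B PB)
    (S : Subalgebra 𝕜 B)
    (hclosed : ∀ x ∈ S, ∀ y ∈ S, PB.bracket x y ∈ S)
    (hfd : FiniteDimensional 𝕜 (B ⧸ Subalgebra.toSubmodule S))
    (hfrac : ∀ b : B, ∃ a ∈ S, ∃ s ∈ S, s ≠ 0 ∧ b * s = a)
    (f : S →ₐ[𝕜] S)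
    (hf : ∀ x y : S,
      (f ⟨PB.bracket x y, hclosed x x.2 y y.2⟩ : B) = PB.bracket (f x) (f y))
    (hinj : Function.Injective f) :
    Function.Bijective f := by
  classical
  set K := FractionRing B with hK
  set ι : B →+* K := algebraMap B K with hι
  have ιinj : Function.Injective ι := IsFractionRing.injective B K
  choose av haS sv hsS hs0 hbs using hfrac
  -- nonvanishing of f-images
  have fne : ∀ u : S, u ≠ 0 → ι ↑(f u) ≠ 0 := by
    intro u hu h
    have h1 : ((f u : B)) = 0 := ιinj (by rw [h, map_zero])
    have h2 : f u = 0 := ZeroMemClass.coe_eq_zero.mp h1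
    exact hu (hinj (by rw [h2, map_zero]))
  set F' : B → K := fun b => ι ↑(f ⟨av b, haS b⟩) / ι ↑(f ⟨sv b, hsS b⟩) with hF'
  have svne : ∀ b : B, (⟨sv b, hsS b⟩ : S) ≠ 0 := by
    intro b h; exact hs0 b (by simpa using congrArg Subtype.val h)
  have hbs' : ∀ b : B, b * ((⟨sv b, hsS b⟩ : S) : B) = ((⟨av b, haS b⟩ : S) : B) := hbs
  have F'_eq : ∀ (b : B) (a' s' : S), s' ≠ 0 → b * ↑s' = ↑a' →
      F' b = ι ↑(f a') / ι ↑(f s') := by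
    intro b a' s' hs' hb
    have h1 : (⟨av b, haS b⟩ : S) * s' = a' * ⟨sv b, hsS b⟩ := by
      apply Subtype.ext
      push_cast
      linear_combination (↑s' : B) * (hbs b).symm + sv b * hb
    have h2 := congrArg (fun u : S => (ι ↑u : K)) (congrArg f h1)
    simp only [map_mul, MulMemClass.coe_mul] at h2
    rw [hF', div_eq_div_iff (fne _ (svne b)) (fne _ hs')]
    exact h2
  have F'_val : ∀ u : S, F' ↑u = ι ↑(f u) := by
    intro u
    rw [F'_eq ↑u u 1 one_ne_zero (by simp), map_one]
    simp
  have F'_one : F' 1 = 1 := by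
    have h : ((1 : S) : B) = (1 : B) := by simp
    rw [← h, F'_val]; simp
  have F'_zero : F' 0 = 0 := by
    have h : ((0 : S) : B) = (0 : B) := by simp
    rw [← h, F'_val]; simp
  have F'_mul : ∀ b c : B, F' (b * c) = F' b * F' c := by
    intro b c
    have e1 := F'_eq b _ _ (svne b) (hbs' b)
    have e2 := F'_eq c _ _ (svne c) (hbs' c)
    have e3 := F'_eq (b*c) (⟨av b, haS b⟩ * ⟨av c, haS c⟩) (⟨sv b, hsS b⟩ * ⟨sv c, hsS c⟩)
      (mul_ne_zero (svne b) (svne c))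
      (by push_cast; linear_combination (c * sv c) * hbs b + av b * hbs c)
    rw [e3, e1, e2, div_mul_div_comm]
    simp only [map_mul, MulMemClass.coe_mul]
  have F'_add : ∀ b c : B, F' (b + c) = F' b + F' c := by
    intro b c
    have e1 := F'_eq b _ _ (svne b) (hbs' b)
    have e2 := F'_eq c _ _ (svne c) (hbs' c)
    have e3 := F'_eq (b+c) (⟨av b, haS b⟩ * ⟨sv c, hsS c⟩ + ⟨av c, haS c⟩ * ⟨sv b, hsS b⟩)
      (⟨sv b, hsS b⟩ * ⟨sv c, hsS c⟩) (mul_ne_zero (svne b) (svne c))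
      (by push_cast; linear_combination sv c * hbs b + sv b * hbs c)
    rw [e3, e1, e2, div_add_div _ _ (fne _ (svne b)) (fne _ (svne c))]
    simp only [map_add, map_mul, MulMemClass.coe_mul, AddMemClass.coe_add]
    ring
  set Fhom : B →+* K :=
    { toFun := F', map_one' := F'_one, map_mul' := F'_mul,
      map_zero' := F'_zero, map_add' := F'_add } with hFhom
  have Finj : Function.Injective F' := by
    have : Function.Injective Fhom := by
      rw [injective_iff_map_eq_zero]
      intro b hb
      have hb' : F' b = 0 := hb
      rw [hF'] at hb'
      rcases div_eq_zero_iff.mp hb' with h | h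
      · have h1 : ((f ⟨av b, haS b⟩ : S) : B) = 0 := ιinj (by rw [h, map_zero])
        have h2 : f ⟨av b, haS b⟩ = 0 := ZeroMemClass.coe_eq_zero.mp h1
        have h3 : (⟨av b, haS b⟩ : S) = 0 := hinj (by rw [h2, map_zero])
        have h4 : av b = 0 := by simpa using congrArg Subtype.val h3
        have h5 : b * sv b = 0 := by rw [hbs b, h4]
        rcases mul_eq_zero.mp h5 with h | h
        · exact h
        · exact absurd h (hs0 b)
      · exact absurd h (fne _ (svne b))
    exact this
  -- B is a finite S-module, hence integral over S
  set N : Submodule 𝕜 B := Subalgebra.toSubmodule S with hN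
  haveI : FiniteDimensional 𝕜 (B ⧸ N) := hfd
  haveI hfinS : Module.Finite S B := by
    set bas := Module.finBasis 𝕜 (B ⧸ N) with hbas
    choose w hw using fun i => Submodule.Quotient.mk_surjective N (bas i)
    refine ⟨⟨insert 1 (Finset.image w Finset.univ), ?_⟩⟩
    rw [eq_top_iff]
    rintro b -
    set c : _ → 𝕜 := fun i => bas.repr (N.mkQ b) i with hc
    have hker : N.mkQ (b - ∑ i, c i • w i) = 0 := by
      rw [map_sub, map_sum, sub_eq_zero]
      simp only [map_smul, Submodule.mkQ_apply, hw]
      exact (bas.sum_repr _).symm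
    have hmem : b - ∑ i, c i • w i ∈ N := by
      have h := hker
      rwa [Submodule.mkQ_apply, Submodule.Quotient.mk_eq_zero] at h
    have hb : b = (b - ∑ i, c i • w i) + ∑ i, c i • w i := by ring
    rw [hb]
    apply Submodule.add_mem
    · have h1 : (⟨b - ∑ i, c i • w i, hmem⟩ : S) • (1 : B) = b - ∑ i, c i • w i := by
        rw [Algebra.smul_def, mul_one]; rfl
      rw [← h1]
      exact Submodule.smul_mem _ _
        (Submodule.subset_span (Finset.mem_coe.mpr (Finset.mem_insert_self 1 _)))
    · apply Submodule.sum_mem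
      intro i _
      rw [← algebraMap_smul S (c i) (w i)]
      exact Submodule.smul_mem _ _ (Submodule.subset_span (Finset.mem_coe.mpr
        (Finset.mem_insert_of_mem (Finset.mem_image_of_mem w (Finset.mem_univ i)))))
  haveI : Algebra.IsIntegral S B := Algebra.IsIntegral.of_finite S B
  -- extension maps B into B
  have hint : ∀ b : B, ∃ c : B, ι c = F' b := by
    intro b
    obtain ⟨p, pmon, pev⟩ := Algebra.IsIntegral.isIntegral (R := S) b
    set φ : S →+* B := S.val.toRingHom.comp f.toRingHom with hφ
    have hroot : Polynomial.eval₂ (algebraMap B K) (F' b) (p.map φ) = 0 := by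
      rw [Polynomial.eval₂_map]
      have hcomp : (algebraMap B K).comp φ = Fhom.comp (algebraMap S B) :=
        RingHom.ext fun u => (F'_val u).symm
      rw [hcomp]
      show Polynomial.eval₂ (Fhom.comp (algebraMap S B)) (Fhom b) p = 0
      rw [← Polynomial.hom_eval₂]
      rw [pev, map_zero]
    have hII : IsIntegral B (F' b) := ⟨p.map φ, pmon.map φ, hroot⟩
    exact IsIntegrallyClosed.isIntegral_iff.mp hII
  choose gf hgf using hint
  have gval : ∀ u : S, gf ↑u = ↑(f u) := by
    intro u
    apply ιinj
    rw [hgf, F'_val]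
  have gmul : ∀ b c : B, gf (b * c) = gf b * gf c := by
    intro b c
    apply ιinj
    rw [map_mul, hgf, hgf, hgf, F'_mul]
  have gadd : ∀ b c : B, gf (b + c) = gf b + gf c := by
    intro b c
    apply ιinj
    rw [map_add, hgf, hgf, hgf, F'_add]
  have gone : gf 1 = 1 := by
    apply ιinj
    rw [hgf, F'_one, map_one]
  have gzero : gf 0 = 0 := by
    apply ιinj
    rw [hgf, F'_zero, map_zero]
  set gA : B →ₐ[𝕜] B :=
    { toFun := gf, map_one' := gone, map_mul' := gmul, map_zero' := gzero,
      map_add' := gadd,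
      commutes' := by
        intro r
        have h : ((algebraMap 𝕜 S r : S) : B) = algebraMap 𝕜 B r := by simp
        show gf (algebraMap 𝕜 B r) = algebraMap 𝕜 B r
        rw [← h, gval, f.commutes, h] } with hgA
  have ginj : Function.Injective gA := by
    intro b c h
    apply Finj
    rw [← hgf, ← hgf]
    exact congrArg ι h
  have gne : ∀ b : B, b ≠ 0 → gA b ≠ 0 := by
    intro b hb h
    exact hb (ginj (by rw [h, map_zero]))
  have gbrS : ∀ (u v : B) (hu : u ∈ S) (hv : v ∈ S),
      gA (PB.bracket u v) = PB.bracket (gA u) (gA v) := by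
    intro u v hu hv
    have h2 : gA (PB.bracket u v) = ((f ⟨PB.bracket u v, hclosed u hu v hv⟩ : S) : B) :=
      gval ⟨PB.bracket u v, hclosed u hu v hv⟩
    rw [h2]
    have h3 := hf ⟨u, hu⟩ ⟨v, hv⟩
    have h4 : gA u = ((f ⟨u, hu⟩ : S) : B) := gval ⟨u, hu⟩
    have h5 : gA v = ((f ⟨v, hv⟩ : S) : B) := gval ⟨v, hv⟩
    rw [h4, h5]
    exact h3
  have gPoisson : ∀ x y : B, gA (PB.bracket x y) = PB.bracket (gA x) (gA y) := by
    intro x y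
    have key := PB.keyL x y (sv x) (sv y)
    rw [hbs x, hbs y] at key
    have keyg := congrArg gA key
    simp only [map_mul, map_sub, map_add, map_pow] at keyg
    rw [gbrS (av x) (av y) (haS x) (haS y), gbrS (sv x) (av y) (hsS x) (haS y),
      gbrS (av x) (sv y) (haS x) (hsS y), gbrS (sv x) (sv y) (hsS x) (hsS y)] at keyg
    have key2 := PB.keyL (gA x) (gA y) (gA (sv x)) (gA (sv y))
    rw [← map_mul gA x (sv x), ← map_mul gA y (sv y), hbs x, hbs y] at key2
    have hne : gA (sv x) ^ 2 * gA (sv y) ^ 2 ≠ 0 :=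
      mul_ne_zero (pow_ne_zero _ (gne _ (hs0 x))) (pow_ne_zero _ (gne _ (hs0 y)))
    have hcan : gA (sv x) ^ 2 * gA (sv y) ^ 2 * gA (PB.bracket x y)
        = gA (sv x) ^ 2 * gA (sv y) ^ 2 * PB.bracket (gA x) (gA y) := by
      linear_combination keyg - key2
    exact mul_left_cancel₀ hne hcan
  have hgbij : Function.Bijective gA := hBdix gA gPoisson ginj
  refine ⟨hinj, ?_⟩
  intro y
  obtain ⟨b, hb⟩ := hgbij.2 ↑y
  have hmapS : N ≤ N.comap gA.toLinearMap := by
    intro v hv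
    have : gA v = ((f ⟨v, hv⟩ : S) : B) := gval ⟨v, hv⟩
    show gA v ∈ N
    rw [this]
    exact (f ⟨v, hv⟩).2
  set gbar : (B ⧸ N) →ₗ[𝕜] (B ⧸ N) := Submodule.mapQ N N gA.toLinearMap hmapS with hgbar
  have hsurj : Function.Surjective gbar := by
    intro z
    obtain ⟨u, rfl⟩ := Submodule.Quotient.mk_surjective N z
    obtain ⟨v, rfl⟩ := hgbij.2 u
    refine ⟨Submodule.Quotient.mk v, ?_⟩
    rw [hgbar, Submodule.mapQ_apply]
    rfl
  have hinj2 : Function.Injective gbar :=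
    (LinearMap.injective_iff_surjective (f := gbar)).mpr hsurj
  have hb0 : (Submodule.Quotient.mk b : B ⧸ N) = 0 := by
    apply hinj2
    rw [map_zero, hgbar, Submodule.mapQ_apply]
    show (Submodule.Quotient.mk (gA b) : B ⧸ N) = 0
    rw [hb]
    exact (Submodule.Quotient.mk_eq_zero N).mpr y.2
  have hbS : b ∈ S := (Submodule.Quotient.mk_eq_zero N).mp hb0
  refine ⟨⟨b, hbS⟩, ?_⟩
  apply Subtype.ext
  have := gval ⟨b, hbS⟩
  rw [show ((⟨b, hbS⟩ : S) : B) = b from rfl] at this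
  rw [← this]
  exact hb
end

section
/- Let 𝕜 be a field of characteristic zero. Let B be a Poisson 𝕜-algebra which is an integral domain, integrally closed in its field of fractions. Let A ⊆ B be a Poisson subalgebra such that B/A is finite-dimensional over 𝕜 and for every b ∈ B there exist a, s ∈ A with s ≠ 0 and b·s = a (i.e. B ⊆ Q(A)). Let R be a Poisson 𝕜-algebra which is an integral domain such that B ⊗_𝕜 R is an integral domain which is integrally closed in its field of fractions. If B is R-Dixmier, then A is R-Dixmier. -/
open scoped TensorProduct

section AuxLemmas
set_option synthInstance.maxHeartbeats 1000000
set_option maxHeartbeats 1000000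

section PSlemmas
variable {𝕜 A : Type*} [CommRing 𝕜] [CommRing A] [Algebra 𝕜 A] (P : PoissonStructure 𝕜 A)

lemma ps_zero_left (b : A) : P.bracket 0 b = 0 := by
  have h : P.bracket ((0:𝕜) • (0:A)) b = (0:𝕜) • P.bracket 0 b := P.smul_left 0 0 b
  simpa using h

lemma ps_zero_right (a : A) : P.bracket a 0 = 0 := by
  rw [P.antisymm, ps_zero_left, neg_zero]

lemma ps_add_right (a b c : A) : P.bracket a (b + c) = P.bracket a b + P.bracket a c := by
  rw [P.antisymm a (b+c), P.add_left, neg_add, ← P.antisymm, ← P.antisymm]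

lemma ps_mul_left (x z y : A) :
    P.bracket (x * z) y = P.bracket x y * z + x * P.bracket z y := by
  have h1 := P.antisymm (x*z) y
  have h2 := P.leibniz y x z
  have h3 := P.antisymm x y
  have h4 := P.antisymm z y
  linear_combination h1 - h2 - z * h3 - x * h4
end PSlemmas

lemma aux_tmul_one_injective {𝕜 N R : Type*} [Field 𝕜] [AddCommGroup N] [Module 𝕜 N]
    [Ring R] [Algebra 𝕜 R] [Nontrivial R] :
    Function.Injective (fun x : N => x ⊗ₜ[𝕜] (1 : R)) := by
  have hinj : LinearMap.ker (Algebra.linearMap 𝕜 R) = ⊥ := by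
    rw [LinearMap.ker_eq_bot]; exact fun a b h => (algebraMap 𝕜 R).injective h
  obtain ⟨φ, hφ⟩ := LinearMap.exists_leftInverse_of_injective _ hinj
  have hφ1 : φ 1 = 1 := by simpa using LinearMap.congr_fun hφ 1
  intro x y h
  have h2 := congrArg ((TensorProduct.rid 𝕜 N).toLinearMap ∘ₗ (LinearMap.lTensor N φ)) h
  simpa [hφ1] using h2

section TensorAux
variable {𝕜 B R : Type*} [Field 𝕜] [CommRing B] [Algebra 𝕜 B]
  [CommRing R] [Algebra 𝕜 R] (S : Subalgebra 𝕜 B)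

lemma aux_map_val_injective :
    Function.Injective (Algebra.TensorProduct.map S.val (AlgHom.id 𝕜 R)) := by
  have hker : LinearMap.ker S.val.toLinearMap = ⊥ := by
    rw [LinearMap.ker_eq_bot]; exact Subtype.val_injective
  obtain ⟨p, hp⟩ := LinearMap.exists_leftInverse_of_injective _ hker
  have key : ∀ u : S ⊗[𝕜] R,
      LinearMap.rTensor R p (Algebra.TensorProduct.map S.val (AlgHom.id 𝕜 R) u) = u := by
    intro u
    induction u using TensorProduct.induction_on with
    | zero => simp
    | tmul s r =>
        have : p (s : B) = s := LinearMap.congr_fun hp s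
        simp [this]
    | add x y hx hy => simp [map_add, hx, hy]
  intro x y h
  have := congrArg (LinearMap.rTensor R p) h
  rwa [key, key] at this

lemma aux_mem_of_tmul_one_mem_range [Nontrivial R] (b : B)
    (h : b ⊗ₜ[𝕜] (1 : R) ∈ Set.range (Algebra.TensorProduct.map S.val (AlgHom.id 𝕜 R))) :
    b ∈ S := by
  obtain ⟨u, hu⟩ := h
  have key : ∀ u : S ⊗[𝕜] R,
      LinearMap.rTensor R (Subalgebra.toSubmodule S).mkQ
        (Algebra.TensorProduct.map S.val (AlgHom.id 𝕜 R) u) = 0 := by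
    intro u
    induction u using TensorProduct.induction_on with
    | zero => simp
    | tmul s r =>
        have : (Subalgebra.toSubmodule S).mkQ (s : B) = 0 := by
          simp [Submodule.mkQ_apply, Submodule.Quotient.mk_eq_zero, s.2]
        simp [this]
    | add x y hx hy => simp [map_add, hx, hy]
  have h0 : (Subalgebra.toSubmodule S).mkQ b ⊗ₜ[𝕜] (1 : R) = (0 : _) ⊗ₜ[𝕜] (1:R) := by
    have := congrArg (LinearMap.rTensor R (Subalgebra.toSubmodule S).mkQ) hu
    rw [key] at this
    simpa [TensorProduct.zero_tmul] using this.symm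
  have := aux_tmul_one_injective h0
  simpa [Submodule.mkQ_apply, Submodule.Quotient.mk_eq_zero] using this

lemma aux_module_finite (hfd : FiniteDimensional 𝕜 (B ⧸ Subalgebra.toSubmodule S)) :
    Module.Finite ↥S B := by
  classical
  set N := Subalgebra.toSubmodule S
  obtain ⟨G, hG⟩ : (⊤ : Submodule 𝕜 (B ⧸ N)).FG := Module.finite_def.mp hfd
  have hsurj := Submodule.mkQ_surjective N
  set l : (B ⧸ N) → B := Function.surjInv hsurj
  have hl : ∀ x, N.mkQ (l x) = x := Function.surjInv_eq hsurj
  set T : Finset B := G.image l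
  have himg : N.mkQ '' (T : Set B) = (G : Set _) := by
    ext x
    simp only [T, Finset.coe_image, Set.image_image, hl]
    simp
  set M : Submodule ↥S B := Submodule.span ↥S (insert (1:B) (T : Set B))
  have hMtop : M = ⊤ := by
    rw [Submodule.eq_top_iff']
    intro b
    have hb : b ∈ Submodule.span 𝕜 (T : Set B) ⊔ N := by
      have h1 : (Submodule.span 𝕜 (T : Set B)).map N.mkQ = ⊤ := by
        rw [Submodule.map_span, himg, hG]
      have : N.mkQ b ∈ (Submodule.span 𝕜 (T : Set B)).map N.mkQ := by rw [h1]; trivial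
      obtain ⟨z, hz, hzy⟩ := this
      have hmem : b - z ∈ N := by
        have h' : Submodule.Quotient.mk (p := N) b = Submodule.Quotient.mk z := by
          simpa [Submodule.mkQ_apply] using hzy.symm
        exact (Submodule.Quotient.eq N).mp h'
      have : b = z + (b - z) := by ring
      rw [this]
      exact Submodule.add_mem_sup hz hmem
    have hle : Submodule.span 𝕜 (T : Set B) ⊔ N ≤ M.restrictScalars 𝕜 := by
      apply sup_le
      · rw [Submodule.span_le]
        intro t ht
        exact Submodule.subset_span (Set.mem_insert_of_mem _ ht)
      · intro x hx
        have hx1 : (⟨x, hx⟩ : ↥S) • (1 : B) = x := by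
          simp [Algebra.smul_def]
        have h1M : (1 : B) ∈ M := Submodule.subset_span (Set.mem_insert _ _)
        have := Submodule.smul_mem M (⟨x, hx⟩ : ↥S) h1M
        rwa [hx1] at this
    exact hle hb
  exact ⟨⟨insert 1 T, by rw [Finset.coe_insert]; exact hMtop⟩⟩

end TensorAux
end AuxLemmas

set_option synthInstance.maxHeartbeats 1000000 in
set_option maxHeartbeats 4000000 in

/-- Lemma 4.8(2): if `B` is integrally closed, `A ⊆ B` is a cofinite-dimensional Poisson
subalgebra with `B ⊆ Q(A)`, `B ⊗ R` is an integrally closed domain, and `B` is `R`-Dixmier,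
then `A` is `R`-Dixmier. -/
theorem relDixmier_of_cofinite_poissonSubalgebra
    {𝕜 B R : Type*} [Field 𝕜] [CharZero 𝕜]
    [CommRing B] [IsDomain B] [Algebra 𝕜 B] [IsIntegrallyClosed B]
    [CommRing R] [IsDomain R] [Algebra 𝕜 R]
    [IsDomain (B ⊗[𝕜] R)] [IsIntegrallyClosed (B ⊗[𝕜] R)]
    (PB : PoissonStructure 𝕜 B) (PR : PoissonStructure 𝕜 R)
    (PBR : PoissonStructure 𝕜 (B ⊗[𝕜] R)) (hPBR : IsTensorBracket PB PR PBR)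
    (hBdix : IsRelDixmier 𝕜 B R PB PBR)
    (S : Subalgebra 𝕜 B)
    (hclosed : ∀ x ∈ S, ∀ y ∈ S, PB.bracket x y ∈ S)
    (hfd : FiniteDimensional 𝕜 (B ⧸ Subalgebra.toSubmodule S))
    (hfrac : ∀ b : B, ∃ a ∈ S, ∃ s ∈ S, s ≠ 0 ∧ b * s = a)
    (PS : PoissonStructure 𝕜 S)
    (hPS : ∀ x y : S, (PS.bracket x y : B) = PB.bracket (x : B) (y : B))
    (PSR : PoissonStructure 𝕜 (S ⊗[𝕜] R)) (hPSR : IsTensorBracket PS PR PSR) :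
    IsRelDixmier 𝕜 S R PS PSR := by
  classical
  intro f hf hfinj
  set ι : S ⊗[𝕜] R →ₐ[𝕜] B ⊗[𝕜] R := Algebra.TensorProduct.map S.val (AlgHom.id 𝕜 R) with hιdef
  have hιinj : Function.Injective ι := aux_map_val_injective S
  -- ι is a Poisson morphism
  have hιP : ∀ u v : S ⊗[𝕜] R, ι (PSR.bracket u v) = PBR.bracket (ι u) (ι v) := by
    intro u v
    induction u using TensorProduct.induction_on with
    | zero =>
        rw [ps_zero_left, map_zero]
        exact (ps_zero_left PBR _).symm
    | add x y hx hy => rw [PSR.add_left, map_add, map_add, PBR.add_left, hx, hy]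
    | tmul s r =>
      induction v using TensorProduct.induction_on with
      | zero =>
          rw [ps_zero_right, map_zero]
          exact (ps_zero_right PBR _).symm
      | add x y hx hy => rw [ps_add_right, map_add, map_add, ps_add_right, hx, hy]
      | tmul t r' =>
        rw [hPSR]
        simp only [hιdef, map_add, Algebra.TensorProduct.map_tmul, AlgHom.id_apply,
          Subalgebra.coe_val, MulMemClass.coe_mul]
        rw [hPBR, hPS]
  -- fraction field setup
  let K := FractionRing (B ⊗[𝕜] R)
  let E : ↥S →+* B ⊗[𝕜] R := (ι.toRingHom).comp f.toRingHom
  let j : (B ⊗[𝕜] R) →+* K := algebraMap _ _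
  have hjinj : Function.Injective j := IsFractionRing.injective _ _
  let F : ↥S →+* K := j.comp E
  have hFapp : ∀ x : ↥S, F x = j (ι (f x)) := fun _ => rfl
  have hFinj : Function.Injective F := by
    intro x y h
    rw [hFapp, hFapp] at h
    exact hfinj (hιinj (hjinj h))
  have hFne : ∀ s : ↥S, (s : B) ≠ 0 → F s ≠ 0 := by
    intro s h h0
    apply h
    have : s = 0 := hFinj (by rw [h0, map_zero])
    rw [this]; rfl
  have hrep : ∀ b : B, ∃ p : ↥S × ↥S, (p.2 : B) ≠ 0 ∧ b * (p.2 : B) = (p.1 : B) := by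
    intro b
    obtain ⟨a, ha, s, hs, hs0, hbs⟩ := hfrac b
    exact ⟨(⟨a, ha⟩, ⟨s, hs⟩), hs0, hbs⟩
  let g0 : B → K := fun b =>
    F (Classical.choose (hrep b)).1 / F (Classical.choose (hrep b)).2
  have hg0 : ∀ (b : B) (a s : ↥S), (s : B) ≠ 0 → b * s = a → g0 b = F a / F s := by
    intro b a s hs hbs
    obtain ⟨hs0', hbs'⟩ := Classical.choose_spec (hrep b)
    set a0 := (Classical.choose (hrep b)).1 with ha0def
    set s0 := (Classical.choose (hrep b)).2 with hs0def
    have hSeq : a0 * s = a * s0 := by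
      apply Subtype.ext
      push_cast
      calc (a0 : B) * s = (b * s0) * s := by rw [hbs']
        _ = (b * s) * s0 := by ring
        _ = (a : B) * s0 := by rw [hbs]
    have hFeq : F a0 * F s = F a * F s0 := by rw [← map_mul, ← map_mul, hSeq]
    have hks : F s ≠ 0 := hFne s hs
    have hks0 : F s0 ≠ 0 := hFne s0 hs0'
    show F a0 / F s0 = F a / F s
    rw [div_eq_div_iff hks0 hks]
    linear_combination hFeq
  have hg0S : ∀ s : ↥S, g0 (s : B) = F s := by
    intro s
    rw [hg0 (s : B) s 1 (by simp) (by simp), map_one, div_one]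
  have hg0mul : ∀ b b' : B, g0 (b * b') = g0 b * g0 b' := by
    intro b b'
    obtain ⟨⟨a, s⟩, hs0, hbs⟩ := hrep b
    obtain ⟨⟨a', s'⟩, hs0', hbs'⟩ := hrep b'
    have key : (b * b') * ((s * s' : ↥S) : B) = ((a * a' : ↥S) : B) := by
      push_cast
      linear_combination (b' * (s' : B)) * hbs + (a : B) * hbs'
    have hss : ((s * s' : ↥S) : B) ≠ 0 := by
      push_cast; exact mul_ne_zero hs0 hs0'
    rw [hg0 _ _ _ hss key, hg0 b a s hs0 hbs, hg0 b' a' s' hs0' hbs', map_mul, map_mul,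
      div_mul_div_comm]
  have hg0add : ∀ b b' : B, g0 (b + b') = g0 b + g0 b' := by
    intro b b'
    obtain ⟨⟨a, s⟩, hs0, hbs⟩ := hrep b
    obtain ⟨⟨a', s'⟩, hs0', hbs'⟩ := hrep b'
    have key : (b + b') * ((s * s' : ↥S) : B) = ((a * s' + a' * s : ↥S) : B) := by
      push_cast
      linear_combination (s' : B) * hbs + (s : B) * hbs'
    have hss : ((s * s' : ↥S) : B) ≠ 0 := by
      push_cast; exact mul_ne_zero hs0 hs0'
    rw [hg0 _ _ _ hss key, hg0 b a s hs0 hbs, hg0 b' a' s' hs0' hbs']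
    rw [div_add_div _ _ (hFne s hs0) (hFne s' hs0')]
    push_cast [map_add, map_mul]
    ring
  let g0R : B →+* K :=
    { toFun := g0
      map_one' := by simpa using hg0S 1
      map_mul' := hg0mul
      map_zero' := by simpa using hg0S 0
      map_add' := hg0add }
  have hg0inj : Function.Injective g0 := by
    refine (injective_iff_map_eq_zero g0R).mpr ?_
    intro b h0
    obtain ⟨⟨a, s⟩, hs0, hbs⟩ := hrep b
    have h0' : F a / F s = 0 := by rw [← hg0 b a s hs0 hbs]; exact h0
    have hFa : F a = 0 := by
      rcases div_eq_zero_iff.mp h0' with h | h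
      · exact h
      · exact absurd h (hFne s hs0)
    have ha : a = 0 := hFinj (by rw [hFa, map_zero])
    have : b * (s : B) = 0 := by rw [hbs, ha]; rfl
    rcases mul_eq_zero.mp this with h | h
    · exact h
    · exact absurd h hs0
  -- integrality: extend g0 to a map g : B → B ⊗ R
  haveI : Module.Finite ↥S B := aux_module_finite S hfd
  haveI : Algebra.IsIntegral ↥S B := Algebra.IsIntegral.of_finite _ _
  have hcomp : g0R.comp (algebraMap ↥S B) = F := by
    ext s
    exact hg0S s
  have hint : ∀ b : B, ∃ y : B ⊗[𝕜] R, j y = g0 b := by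
    intro b
    obtain ⟨p, hpm, hpe⟩ := (Algebra.IsIntegral.isIntegral (R := ↥S) b)
    have h1 : Polynomial.eval₂ F (g0 b) p = 0 := by
      have h2 := Polynomial.hom_eval₂ p (algebraMap ↥S B) g0R b
      rw [hpe, map_zero, hcomp] at h2
      exact h2.symm
    have hI : IsIntegral (B ⊗[𝕜] R) (g0 b) := by
      refine ⟨p.map E, hpm.map E, ?_⟩
      rw [Polynomial.eval₂_map]
      exact h1
    exact IsIntegrallyClosed.isIntegral_iff.mp hI
  let g1 : B → B ⊗[𝕜] R := fun b => Classical.choose (hint b)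
  have hg1 : ∀ b, j (g1 b) = g0 b := fun b => Classical.choose_spec (hint b)
  have hg1S : ∀ s : ↥S, g1 (s : B) = ι (f s) := by
    intro s
    apply hjinj
    rw [hg1, hg0S, hFapp]
  let g : B →ₐ[𝕜] B ⊗[𝕜] R :=
    { toFun := g1
      map_one' := by
        apply hjinj
        rw [hg1, map_one]
        simpa using hg0S 1
      map_mul' := fun x y => by
        apply hjinj
        rw [hg1, map_mul, hg1, hg1, hg0mul]
      map_zero' := by
        apply hjinj
        rw [hg1, map_zero]
        simpa using hg0S 0
      map_add' := fun x y => by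
        apply hjinj
        rw [hg1, map_add, hg1, hg1, hg0add]
      commutes' := fun c => by
        apply hjinj
        rw [hg1]
        have hc : (algebraMap 𝕜 B c) = ((algebraMap 𝕜 ↥S c : ↥S) : B) := by
          simp
        rw [hc, hg0S, hFapp, AlgHom.commutes, AlgHom.commutes] }
  have hgapp : ∀ b : B, g b = g1 b := fun _ => rfl
  have hginj : Function.Injective g := by
    intro x y h
    apply hg0inj
    rw [← hg1, ← hg1]
    rw [hgapp, hgapp] at h
    rw [h]
  have hgS : ∀ s : ↥S, g (s : B) = ι (f s) := hg1S
  have hgne : ∀ t : ↥S, (t : B) ≠ 0 → g (t : B) ≠ 0 := by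
    intro t ht h0
    exact ht (hginj (h0.trans (map_zero g).symm))
  -- g is a Poisson morphism
  have hΔSS : ∀ s t : ↥S, g (PB.bracket ↑s ↑t) = PBR.bracket (g ↑s) (g ↑t) := by
    intro s t
    rw [hgS s, hgS t, ← hPS, hgS, hf, hιP]
  have hΔS : ∀ (s : ↥S) (b : B), g (PB.bracket ↑s b) = PBR.bracket (g ↑s) (g b) := by
    intro s b
    obtain ⟨⟨c, t⟩, ht0, hbt⟩ := hrep b
    have h1 : PB.bracket ↑s ↑c = PB.bracket (↑s) b * ↑t + b * PB.bracket ↑s ↑t := by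
      rw [← hbt]; exact PB.leibniz ↑s b ↑t
    have h2 := congrArg g h1
    rw [map_add, map_mul, map_mul] at h2
    have h3 : PBR.bracket (g ↑s) (g ↑c) =
        PBR.bracket (g ↑s) (g b) * g ↑t + g b * PBR.bracket (g ↑s) (g ↑t) := by
      have hc : g (c : B) = g b * g (t : B) := by rw [← map_mul, hbt]
      rw [hc, PBR.leibniz]
    have h4 : (g (PB.bracket ↑s b) - PBR.bracket (g ↑s) (g b)) * g ↑t = 0 := by
      rw [hΔSS s c, hΔSS s t] at h2
      linear_combination h3 - h2
    rcases mul_eq_zero.mp h4 with h | h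
    · exact sub_eq_zero.mp h
    · exact absurd h (hgne t ht0)
  have hgP : IsPoissonHom PB PBR g := by
    intro x b
    obtain ⟨⟨a, s⟩, hs0, hxs⟩ := hrep x
    have h1 : PB.bracket ↑a b = PB.bracket x b * ↑s + x * PB.bracket ↑s b := by
      rw [← hxs]; exact ps_mul_left PB x ↑s b
    have h2 := congrArg g h1
    rw [map_add, map_mul, map_mul] at h2
    have h3 : PBR.bracket (g ↑a) (g b) =
        PBR.bracket (g x) (g b) * g ↑s + g x * PBR.bracket (g ↑s) (g b) := by
      have hga : g (a : B) = g x * g (s : B) := by rw [← map_mul, hxs]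
      rw [hga, ps_mul_left PBR]
    have h4 : (g (PB.bracket x b) - PBR.bracket (g x) (g b)) * g ↑s = 0 := by
      rw [hΔS a b, hΔS s b] at h2
      linear_combination h3 - h2
    rcases mul_eq_zero.mp h4 with h | h
    · exact sub_eq_zero.mp h
    · exact absurd h (hgne s hs0)
  -- apply the Dixmier property of B
  have hrange := hBdix g hgP hginj
  haveI : Nontrivial R := inferInstance
  have htone : Function.Injective (fun x : B => x ⊗ₜ[𝕜] (1 : R)) := aux_tmul_one_injective
  have hψex : ∀ b : B, ∃ b' : B, b' ⊗ₜ[𝕜] (1 : R) = g b := by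
    intro b
    have hb : g b ∈ Set.range g := ⟨b, rfl⟩
    rw [hrange] at hb
    obtain ⟨b', hb'⟩ := hb
    exact ⟨b', hb'⟩
  let ψ : B → B := fun b => Classical.choose (hψex b)
  have hψ : ∀ b, ψ b ⊗ₜ[𝕜] (1 : R) = g b := fun b => Classical.choose_spec (hψex b)
  have hψsurj : ∀ b : B, ∃ b₀, ψ b₀ = b := by
    intro b
    have hb : b ⊗ₜ[𝕜] (1 : R) ∈ Set.range g := by
      rw [hrange]; exact ⟨b, rfl⟩
    obtain ⟨b₀, hb₀⟩ := hb
    refine ⟨b₀, htone ?_⟩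
    show ψ b₀ ⊗ₜ[𝕜] (1 : R) = b ⊗ₜ[𝕜] (1 : R)
    rw [hψ b₀, hb₀]
  have hψS : ∀ s : ↥S, ψ (s : B) ∈ S := by
    intro s
    apply aux_mem_of_tmul_one_mem_range (R := R) S
    rw [hψ, hgS, hιdef]
    exact ⟨f s, rfl⟩
  have hψadd : ∀ x y, ψ (x + y) = ψ x + ψ y := by
    intro x y
    apply htone
    show (ψ (x + y)) ⊗ₜ[𝕜] (1 : R) = (ψ x + ψ y) ⊗ₜ[𝕜] (1 : R)
    rw [TensorProduct.add_tmul, hψ, hψ, hψ, map_add]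
  have hψsmul : ∀ (c : 𝕜) (x : B), ψ (c • x) = c • ψ x := by
    intro c x
    apply htone
    show (ψ (c • x)) ⊗ₜ[𝕜] (1 : R) = (c • ψ x) ⊗ₜ[𝕜] (1 : R)
    rw [← TensorProduct.smul_tmul', hψ, hψ, map_smul]
  let ψL : B →ₗ[𝕜] B := { toFun := ψ, map_add' := hψadd, map_smul' := hψsmul }
  set N := Subalgebra.toSubmodule S with hNdef
  have hle : N ≤ N.comap ψL := by
    intro x hx
    exact hψS ⟨x, hx⟩
  let ψQ := Submodule.mapQ N N ψL hle
  have hψQsurj : Function.Surjective ψQ := by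
    intro y
    obtain ⟨b, rfl⟩ := Submodule.mkQ_surjective N y
    obtain ⟨b₀, hb₀⟩ := hψsurj b
    refine ⟨N.mkQ b₀, ?_⟩
    show ψQ (Submodule.Quotient.mk b₀) = N.mkQ b
    rw [Submodule.mapQ_apply]
    show Submodule.Quotient.mk (ψ b₀) = N.mkQ b
    rw [hb₀]
    rfl
  have hψQinj : Function.Injective ψQ := LinearMap.injective_iff_surjective.mpr hψQsurj
  have hψonto : ∀ s : ↥S, ∃ a₀ : ↥S, ψ (a₀ : B) = (s : B) := by
    intro s
    obtain ⟨b, hb⟩ := hψsurj (s : B)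
    have hbN : b ∈ N := by
      have h0 : ψQ (N.mkQ b) = 0 := by
        show ψQ (Submodule.Quotient.mk b) = 0
        rw [Submodule.mapQ_apply]
        show N.mkQ (ψ b) = 0
        rw [hb]
        simp [Submodule.mkQ_apply, Submodule.Quotient.mk_eq_zero, s.2]
      have h1 := hψQinj (h0.trans (map_zero ψQ).symm)
      simpa [Submodule.mkQ_apply, Submodule.Quotient.mk_eq_zero] using h1
    exact ⟨⟨b, hbN⟩, hb⟩
  -- conclusion
  ext u
  constructor
  · rintro ⟨a, rfl⟩
    refine ⟨⟨ψ (a : B), hψS a⟩, ?_⟩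
    apply hιinj
    show ι ((⟨ψ (a : B), hψS a⟩ : ↥S) ⊗ₜ[𝕜] (1 : R)) = ι (f a)
    rw [← hgS a, ← hψ (a : B)]
    simp [hιdef]
  · rintro ⟨a, rfl⟩
    obtain ⟨a₀, ha₀⟩ := hψonto a
    refine ⟨a₀, ?_⟩
    apply hιinj
    show ι (f a₀) = ι ((a : ↥S) ⊗ₜ[𝕜] (1 : R))
    rw [← hgS a₀, ← hψ ((a₀ : ↥S) : B), ha₀]
    simp [hιdef]
end

section
/- Let 𝕜 be a field of characteristic zero, λ ∈ 𝕜 nonzero, and M = (m_ij) ∈ M_n(ℤ) a skew-symmetric integer matrix; set Λ = λM. If the Poisson torus L_Λ(𝕜) is Poisson simple, then every Poisson 𝕜-algebra endomorphism of L_Λ(𝕜) is bijective (i.e., L_Λ(𝕜) is Dixmier). -/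
open scoped TensorProduct

instance finWFLT (n : ℕ) : WellFoundedLT (Fin n) := inferInstance

namespace TorusAux

lemma extreme_aux {α : Type*} [AddCommGroup α] [LinearOrder α] [IsOrderedAddMonoid α]
    {a1 a2 b1 b2 : α} (h1 : a1 ≤ b1) (h2 : a2 ≤ b2) (h : a1 + a2 = b1 + b2) :
    a1 = b1 ∧ a2 = b2 := by
  rcases h1.lt_or_eq with h1' | rfl
  · exact absurd h (ne_of_lt (add_lt_add_of_lt_of_le h1' h2))
  · exact ⟨rfl, add_left_cancel h⟩

variable {𝕜 : Type*} [Field 𝕜] {n : ℕ}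

lemma mul_apply_extreme (p q : AddMonoidAlgebra 𝕜 (Fin n → ℤ)) {a b : Fin n → ℤ}
    (ha : a ∈ p.coeff.support) (hb : b ∈ q.coeff.support)
    (hext : ∀ x ∈ p.coeff.support, ∀ y ∈ q.coeff.support, x + y = a + b → x = a ∧ y = b) :
    (p * q).coeff (a + b) = p.coeff a * q.coeff b := by
  classical
  rw [AddMonoidAlgebra.coeff_mul]
  simp only [Finsupp.sum]
  rw [Finset.sum_eq_single a]
  · rw [Finset.sum_eq_single b]
    · rw [if_pos rfl]
    · intro y hy hyb
      rw [if_neg]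
      intro hxy
      exact hyb (hext a ha y hy hxy).2
    · intro hbq; exact absurd hb hbq
  · intro x hx hxa
    apply Finset.sum_eq_zero
    intro y hy
    rw [if_neg]
    intro hxy
    exact hxa (hext x hx y hy hxy).1
  · intro hap; exact absurd ha hap

lemma eq_single_of_mul_eq_one {p q : AddMonoidAlgebra 𝕜 (Fin n → ℤ)} (h : p * q = 1) :
    ∃ (u : Fin n → ℤ) (c : 𝕜), c ≠ 0 ∧ p = AddMonoidAlgebra.single u c := by
  classical
  have hp : p ≠ 0 := by rintro rfl; rw [zero_mul] at h; exact one_ne_zero h.symm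
  have hq : q ≠ 0 := by rintro rfl; rw [mul_zero] at h; exact one_ne_zero h.symm
  obtain ⟨a₁, ha₁, hmax₁⟩ := p.coeff.support.exists_max_image (fun x : Fin n → ℤ => toLex x)
    (Finsupp.support_nonempty_iff.mpr (AddMonoidAlgebra.coeff_eq_zero.not.mpr hp))
  obtain ⟨a₀, ha₀, hmin₁⟩ := p.coeff.support.exists_min_image (fun x : Fin n → ℤ => toLex x)
    (Finsupp.support_nonempty_iff.mpr (AddMonoidAlgebra.coeff_eq_zero.not.mpr hp))
  obtain ⟨b₁, hb₁, hmax₂⟩ := q.coeff.support.exists_max_image (fun x : Fin n → ℤ => toLex x)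
    (Finsupp.support_nonempty_iff.mpr (AddMonoidAlgebra.coeff_eq_zero.not.mpr hq))
  obtain ⟨b₀, hb₀, hmin₂⟩ := q.coeff.support.exists_min_image (fun x : Fin n → ℤ => toLex x)
    (Finsupp.support_nonempty_iff.mpr (AddMonoidAlgebra.coeff_eq_zero.not.mpr hq))
  have hsupp1 : (1 : AddMonoidAlgebra 𝕜 (Fin n → ℤ)).coeff.support = {0} := by
    rw [AddMonoidAlgebra.one_def, AddMonoidAlgebra.coeff_single,
      Finsupp.support_single_ne_zero _ (one_ne_zero)]
  have key : ∀ (a b : Fin n → ℤ), a ∈ p.coeff.support → b ∈ q.coeff.support →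
      (∀ x ∈ p.coeff.support, toLex x ≤ toLex a) → (∀ y ∈ q.coeff.support, toLex y ≤ toLex b) →
      a + b = 0 := by
    intro a b ha hb hma hmb
    have hco : (p * q).coeff (a + b) = p.coeff a * q.coeff b := by
      apply mul_apply_extreme p q ha hb
      intro x hx y hy hxy
      have : toLex x = toLex a ∧ toLex y = toLex b := by
        apply extreme_aux (hma x hx) (hmb y hy)
        show toLex (x + y) = toLex (a + b)
        rw [hxy]
      exact ⟨toLex.injective this.1, toLex.injective this.2⟩
    have hne : (p * q).coeff (a + b) ≠ 0 := by
      rw [hco]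
      exact mul_ne_zero (Finsupp.mem_support_iff.mp ha) (Finsupp.mem_support_iff.mp hb)
    have : a + b ∈ (p * q).coeff.support := Finsupp.mem_support_iff.mpr hne
    rw [h, hsupp1, Finset.mem_singleton] at this
    exact this
  have hmax : a₁ + b₁ = 0 := key a₁ b₁ ha₁ hb₁ hmax₁ hmax₂
  -- min version : apply key to negated order via extreme on mins
  have hmin : a₀ + b₀ = 0 := by
    have hco : (p * q).coeff (a₀ + b₀) = p.coeff a₀ * q.coeff b₀ := by
      apply mul_apply_extreme p q ha₀ hb₀
      intro x hx y hy hxy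
      have : toLex a₀ = toLex x ∧ toLex b₀ = toLex y := by
        apply extreme_aux (hmin₁ x hx) (hmin₂ y hy)
        show toLex (a₀ + b₀) = toLex (x + y)
        rw [hxy]
      exact ⟨(toLex.injective this.1).symm, (toLex.injective this.2).symm⟩
    have hne : (p * q).coeff (a₀ + b₀) ≠ 0 := by
      rw [hco]
      exact mul_ne_zero (Finsupp.mem_support_iff.mp ha₀) (Finsupp.mem_support_iff.mp hb₀)
    have : a₀ + b₀ ∈ (p * q).coeff.support := Finsupp.mem_support_iff.mpr hne
    rw [h, hsupp1, Finset.mem_singleton] at this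
    exact this
  have ha01 : a₀ = a₁ := by
    have : toLex a₀ = toLex a₁ ∧ toLex b₀ = toLex b₁ := by
      apply extreme_aux (hmax₁ a₀ ha₀) (hmax₂ b₀ hb₀)
      show toLex (a₀ + b₀) = toLex (a₁ + b₁)
      rw [hmin, hmax]
    exact toLex.injective this.1
  have hsub : p.coeff.support ⊆ {a₁} := by
    intro x hx
    rw [Finset.mem_singleton]
    refine toLex.injective (le_antisymm (hmax₁ x hx) ?_)
    rw [← ha01]
    exact hmin₁ x hx
  refine ⟨a₁, p.coeff a₁, Finsupp.mem_support_iff.mp ha₁, ?_⟩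
  apply AddMonoidAlgebra.coeff_injective
  rw [AddMonoidAlgebra.coeff_single]
  exact Finsupp.support_subset_singleton.mp hsub

end TorusAux

namespace TorusAux

variable {𝕜 A : Type*} [CommRing 𝕜] [CommRing A] [Algebra 𝕜 A] (P : PoissonStructure 𝕜 A)

lemma br_zero_left (b : A) : P.bracket 0 b = 0 := by
  have h := P.add_left 0 0 b
  rw [add_zero] at h
  exact (left_eq_add.mp h)

lemma br_zero_right (a : A) : P.bracket a 0 = 0 := by
  rw [P.antisymm, br_zero_left, neg_zero]

lemma br_add_right (a b c : A) : P.bracket a (b + c) = P.bracket a b + P.bracket a c := by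
  rw [P.antisymm a (b + c), P.add_left, P.antisymm b a, P.antisymm c a]
  ring

lemma br_sub_right (a b c : A) : P.bracket a (b - c) = P.bracket a b - P.bracket a c := by
  rw [P.antisymm a (b - c), sub_eq_add_neg b c, P.add_left, P.antisymm b a]
  have : P.bracket (-c) a = - P.bracket c a := by
    have h := P.add_left c (-c) a
    rw [add_neg_cancel, br_zero_left] at h
    rw [eq_comm, ← neg_eq_iff_add_eq_zero] at h
    exact h.symm
  rw [this, P.antisymm c a]
  ring

lemma br_smul_right (r : 𝕜) (a b : A) : P.bracket a (r • b) = r • P.bracket a b := by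
  rw [P.antisymm a (r • b), P.smul_left, P.antisymm b a, smul_neg, neg_neg]

/-- bracket as an AddMonoidHom in the first variable -/
lemma br_sum_left {ι : Type*} (s : Finset ι) (g : ι → A) (b : A) :
    P.bracket (∑ i ∈ s, g i) b = ∑ i ∈ s, P.bracket (g i) b := by
  classical
  induction s using Finset.induction_on with
  | empty => simp [br_zero_left]
  | @insert a s h ih => rw [Finset.sum_insert h, P.add_left, ih, Finset.sum_insert h]

end TorusAux

namespace TorusAux
open Matrix

def Bz {n : ℕ} (M : Matrix (Fin n) (Fin n) ℤ) (u v : Fin n → ℤ) : ℤ :=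
  ∑ i, ∑ j, u i * M i j * v j

lemma Bz_eq_dot {n : ℕ} (M : Matrix (Fin n) (Fin n) ℤ) (u v : Fin n → ℤ) :
    Bz M u v = u ⬝ᵥ M.mulVec v := by
  unfold Bz Matrix.mulVec
  simp only [dotProduct, Finset.mul_sum, mul_assoc]

lemma Bz_single_single {n : ℕ} (M : Matrix (Fin n) (Fin n) ℤ) (i j : Fin n) :
    Bz M (Pi.single i 1) (Pi.single j 1) = M i j := by
  rw [Bz_eq_dot, single_dotProduct, Matrix.mulVec_single, one_mul]
  simp

lemma mulVec_dotProduct_eq {n : ℕ} (A N : Matrix (Fin n) (Fin n) ℤ) (u w : Fin n → ℤ) :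
    (A.mulVec u) ⬝ᵥ (N.mulVec w) = u ⬝ᵥ ((Aᵀ * N).mulVec w) := by
  rw [dotProduct_comm, Matrix.dotProduct_mulVec, dotProduct_comm,
    ← Matrix.mulVec_transpose, Matrix.mulVec_mulVec]

lemma Bz_mulVec {n : ℕ} (M D : Matrix (Fin n) (Fin n) ℤ) (u v : Fin n → ℤ) :
    Bz M (D.mulVec u) (D.mulVec v) = Bz (Dᵀ * M * D) u v := by
  rw [Bz_eq_dot, Bz_eq_dot, Matrix.mulVec_mulVec, mulVec_dotProduct_eq, ← Matrix.mul_assoc]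

lemma Bz_dvec_zero {n : ℕ} (M : Matrix (Fin n) (Fin n) ℤ) (u v : Fin n → ℤ)
    (h : M.mulVec v = 0) (w : Fin n → ℤ) : Bz M w v = 0 := by
  rw [Bz_eq_dot, h, dotProduct_zero]

end TorusAux

/-- Theorem 2.6: a Poisson-simple uniparameter Poisson torus `L_{λM}(𝕜)` is Dixmier:
every Poisson endomorphism is bijective. -/
theorem simple_uniparameter_poissonTorus_isDixmier
    {𝕜 : Type*} [Field 𝕜] [CharZero 𝕜] (n : ℕ) (lam : 𝕜) (hlam : lam ≠ 0)
    (M : Matrix (Fin n) (Fin n) ℤ) (hskew : M.transpose = -M)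
    (P : PoissonStructure 𝕜 (AddMonoidAlgebra 𝕜 (Fin n → ℤ)))
    (hP : IsTorusBracket n (Matrix.of fun i j => lam * (M i j : 𝕜)) P)
    (hsimple : IsPoissonSimple P)
    (f : AddMonoidAlgebra 𝕜 (Fin n → ℤ) →ₐ[𝕜] AddMonoidAlgebra 𝕜 (Fin n → ℤ))
    (hf : IsPoissonHom P P f) :
    Function.Bijective f := by
  classical
  have hone : (1 : AddMonoidAlgebra 𝕜 (Fin n → ℤ)) = AddMonoidAlgebra.single 0 1 :=
    AddMonoidAlgebra.one_def
  -- scalar identity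
  have hs : ∀ u v : Fin n → ℤ,
      (∑ i, ∑ j, (u i : 𝕜) * (Matrix.of fun i j => lam * (M i j : 𝕜)) i j * (v j : 𝕜)) =
        lam * ((TorusAux.Bz M u v : ℤ) : 𝕜) := by
    intro u v
    simp only [Matrix.of_apply, TorusAux.Bz]
    push_cast
    rw [Finset.mul_sum]
    refine Finset.sum_congr rfl fun i _ => ?_
    rw [Finset.mul_sum]
    refine Finset.sum_congr rfl fun j _ => ?_
    ring
  -- bracket of general singles
  have hbr : ∀ (u v : Fin n → ℤ) (r t : 𝕜),
      P.bracket (AddMonoidAlgebra.single u r) (AddMonoidAlgebra.single v t) =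
        AddMonoidAlgebra.single (u + v) (r * t * (lam * ((TorusAux.Bz M u v : ℤ) : 𝕜))) := by
    intro u v r t
    have h1 : AddMonoidAlgebra.single u r = r • AddMonoidAlgebra.single u (1 : 𝕜) := by
      rw [AddMonoidAlgebra.smul_single', mul_one]
    have h2 : AddMonoidAlgebra.single v t = t • AddMonoidAlgebra.single v (1 : 𝕜) := by
      rw [AddMonoidAlgebra.smul_single', mul_one]
    rw [h1, h2, P.smul_left, TorusAux.br_smul_right, hP u v, hs, smul_smul, smul_smul,
      AddMonoidAlgebra.smul_single', mul_one]
  -- bracket with a "central" single vanishes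
  have hbrx : ∀ (v : Fin n → ℤ), (∀ w, TorusAux.Bz M w v = 0) →
      ∀ x : AddMonoidAlgebra 𝕜 (Fin n → ℤ),
        P.bracket x (AddMonoidAlgebra.single v (1:𝕜)) = 0 := by
    intro v hv x
    conv_lhs => rw [← AddMonoidAlgebra.sum_coeff_single x, Finsupp.sum]
    rw [TorusAux.br_sum_left]
    apply Finset.sum_eq_zero
    intro w _
    rw [hbr w v _ 1, hv w]
    simp
  -- trivial units: structure of f on monomials
  have hu : ∀ u : Fin n → ℤ, ∃ (w : Fin n → ℤ) (e : 𝕜), e ≠ 0 ∧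
      f (AddMonoidAlgebra.single u 1) = AddMonoidAlgebra.single w e := by
    intro u
    apply TorusAux.eq_single_of_mul_eq_one (q := f (AddMonoidAlgebra.single (-u) (1 : 𝕜)))
    rw [← map_mul, AddMonoidAlgebra.single_mul_single, add_neg_cancel, one_mul, ← hone, map_one]
  choose d c hc hfd using hu
  have hfs : ∀ (w : Fin n → ℤ) (r : 𝕜),
      f (AddMonoidAlgebra.single w r) = AddMonoidAlgebra.single (d w) (r * c w) := by
    intro w r
    rw [← mul_one r, ← AddMonoidAlgebra.smul_single', map_smul, hfd,
      AddMonoidAlgebra.smul_single', mul_one]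
  -- additivity of d, multiplicativity of c
  have hadd : ∀ u v : Fin n → ℤ, d (u + v) = d u + d v ∧ c (u + v) = c u * c v := by
    intro u v
    have h1 : f (AddMonoidAlgebra.single (u + v) (1:𝕜)) =
        f (AddMonoidAlgebra.single u 1) * f (AddMonoidAlgebra.single v 1) := by
      rw [← map_mul, AddMonoidAlgebra.single_mul_single, one_mul]
    rw [hfd, hfd, hfd, AddMonoidAlgebra.single_mul_single] at h1
    rcases AddMonoidAlgebra.single_inj.mp h1 with ⟨h2, h3⟩ | ⟨h2, h3⟩
    · exact ⟨h2, h3⟩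
    · exact absurd h2 (hc _)
  -- Bz is preserved by d
  have hB : ∀ u v : Fin n → ℤ, TorusAux.Bz M u v = TorusAux.Bz M (d u) (d v) := by
    intro u v
    have h := hf (AddMonoidAlgebra.single u 1) (AddMonoidAlgebra.single v 1)
    rw [hbr u v 1 1, hfs, hfd, hfd, hbr, (hadd u v).1] at h
    have heq := AddMonoidAlgebra.single_right_injective h
    rw [(hadd u v).2] at heq
    have hcc : c u * c v ≠ 0 := mul_ne_zero (hc u) (hc v)
    have hXY : lam * ((TorusAux.Bz M u v : ℤ) : 𝕜) =
        lam * ((TorusAux.Bz M (d u) (d v) : ℤ) : 𝕜) :=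
      mul_right_cancel₀ hcc (by linear_combination heq)
    exact_mod_cast mul_left_cancel₀ hlam hXY
  -- nondegeneracy of M from Poisson simplicity
  have hM : ∀ u : Fin n → ℤ, u ≠ 0 → M.mulVec u ≠ 0 := by
    intro u hu0 hMu
    have hv : ∀ w, TorusAux.Bz M w u = 0 := TorusAux.Bz_dvec_zero M u u hMu
    set g : AddMonoidAlgebra 𝕜 (Fin n → ℤ) :=
      AddMonoidAlgebra.single u (1:𝕜) - 1 with hgdef
    have hbrg : ∀ x : AddMonoidAlgebra 𝕜 (Fin n → ℤ), P.bracket x g = 0 := by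
      intro x
      rw [hgdef, TorusAux.br_sub_right, hbrx u hv x, hone,
        hbrx 0 (fun w => by simp [TorusAux.Bz]) x, sub_zero]
    have hpois : ∀ x : AddMonoidAlgebra 𝕜 (Fin n → ℤ),
        ∀ y ∈ Ideal.span {g}, P.bracket x y ∈ Ideal.span {g} := by
      intro x y hy
      obtain ⟨a, rfl⟩ := Ideal.mem_span_singleton'.mp hy
      rw [P.leibniz, hbrg, mul_zero, add_zero]
      exact Ideal.mem_span_singleton'.mpr ⟨P.bracket x a, rfl⟩
    rcases hsimple (Ideal.span {g}) hpois with hbot | htop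
    · have : g = 0 := by
        have := Ideal.subset_span (s := {g}) rfl
        rw [hbot] at this
        exact this
      rw [hgdef, sub_eq_zero, hone] at this
      rcases AddMonoidAlgebra.single_inj.mp this with ⟨h2, _⟩ | ⟨h2, _⟩
      · exact hu0 h2
      · exact one_ne_zero h2
    · have h1 : (1 : AddMonoidAlgebra 𝕜 (Fin n → ℤ)) ∈ Ideal.span {g} := by
        rw [htop]; trivial
      obtain ⟨a, ha⟩ := Ideal.mem_span_singleton'.mp h1
      obtain ⟨w, e, he, hge⟩ := TorusAux.eq_single_of_mul_eq_one (p := g) (q := a)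
        (by rw [mul_comm]; exact ha)
      have hgu : g.coeff u = 1 := by
        rw [hgdef, hone]
        rw [AddMonoidAlgebra.coeff_sub, Finsupp.sub_apply, AddMonoidAlgebra.coeff_single,
          AddMonoidAlgebra.coeff_single]
        rw [Finsupp.single_eq_same, Finsupp.single_eq_of_ne' (Ne.symm hu0), sub_zero]
      have hg0 : g.coeff 0 = -1 := by
        rw [hgdef, hone]
        rw [AddMonoidAlgebra.coeff_sub, Finsupp.sub_apply, AddMonoidAlgebra.coeff_single,
          AddMonoidAlgebra.coeff_single]
        rw [Finsupp.single_eq_of_ne' hu0, Finsupp.single_eq_same, zero_sub]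
      rw [hge, AddMonoidAlgebra.coeff_single] at hgu hg0
      have hw1 : u = w := by
        by_contra hne
        rw [Finsupp.single_eq_of_ne' (Ne.symm hne)] at hgu
        exact one_ne_zero hgu.symm
      have hw2 : (0 : Fin n → ℤ) = w := by
        by_contra hne
        rw [Finsupp.single_eq_of_ne' (Ne.symm hne)] at hg0
        exact neg_ne_zero.mpr one_ne_zero hg0.symm
      exact hu0 (hw1.trans hw2.symm)
  -- the matrix of d
  have hdlin : ∀ u v : Fin n → ℤ, d (u + v) = d u + d v := fun u v => (hadd u v).1
  set φ : (Fin n → ℤ) →+ (Fin n → ℤ) := AddMonoidHom.mk' d hdlin with hφ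
  set D : Matrix (Fin n) (Fin n) ℤ := LinearMap.toMatrix' φ.toIntLinearMap with hD
  have hdD : ∀ u, d u = D.mulVec u := by
    intro u
    rw [hD, ← Matrix.toLin'_apply, Matrix.toLin'_toMatrix']
    rfl
  -- M = Dᵀ * M * D
  have hMeq : M = D.transpose * M * D := by
    ext i j
    have h := hB (Pi.single i 1) (Pi.single j 1)
    rw [TorusAux.Bz_single_single, hdD, hdD, TorusAux.Bz_mulVec,
      TorusAux.Bz_single_single] at h
    exact h
  -- det M ≠ 0
  have hdet : M.det ≠ 0 := by
    intro h0
    obtain ⟨v, hv0, hMv⟩ := Matrix.exists_mulVec_eq_zero_iff.mpr h0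
    exact hM v hv0 hMv
  -- det D is a unit
  have hDdet : IsUnit D.det := by
    have h1 : M.det = M.det * (D.det * D.det) := by
      conv_lhs => rw [hMeq]
      rw [Matrix.det_mul, Matrix.det_mul, Matrix.det_transpose]
      ring
    have h2 : (1 : ℤ) = D.det * D.det := by
      have := mul_left_cancel₀ hdet (h1.symm.trans (mul_one M.det).symm)
      linarith [this]
    exact IsUnit.of_mul_eq_one _ h2.symm
  have : Invertible D := D.invertibleOfIsUnitDet hDdet
  -- d is surjective
  have hdsurj : ∀ w : Fin n → ℤ, ∃ u, d u = w := by
    intro w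
    refine ⟨(⅟D).mulVec w, ?_⟩
    rw [hdD, Matrix.mulVec_mulVec, mul_invOf_self, Matrix.one_mulVec]
  -- surjectivity of f
  have hsurj : Function.Surjective f := by
    have hsingle : ∀ (w : Fin n → ℤ) (r : 𝕜),
        ∃ x, f x = AddMonoidAlgebra.single w r := by
      intro w r
      obtain ⟨u, hu'⟩ := hdsurj w
      refine ⟨AddMonoidAlgebra.single u (r * (c u)⁻¹), ?_⟩
      rw [hfs, hu', mul_assoc, inv_mul_cancel₀ (hc u), mul_one]
    intro y
    induction y using AddMonoidAlgebra.induction with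
    | zero => exact ⟨0, map_zero f⟩
    | single_add w r y _ _ ih =>
      obtain ⟨x1, hx1⟩ := hsingle w r
      obtain ⟨x2, hx2⟩ := ih
      exact ⟨x1 + x2, by rw [map_add, hx1, hx2]⟩
  -- injectivity of f
  have hinj : Function.Injective f := by
    have hker : ∀ x : AddMonoidAlgebra 𝕜 (Fin n → ℤ),
        ∀ y ∈ RingHom.ker (f : AddMonoidAlgebra 𝕜 (Fin n → ℤ) →+*
          AddMonoidAlgebra 𝕜 (Fin n → ℤ)),
        P.bracket x y ∈ RingHom.ker (f : AddMonoidAlgebra 𝕜 (Fin n → ℤ) →+*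
          AddMonoidAlgebra 𝕜 (Fin n → ℤ)) := by
      intro x y hy
      rw [RingHom.mem_ker] at hy ⊢
      show f (P.bracket x y) = 0
      rw [hf x y]
      have : f y = 0 := hy
      rw [this, TorusAux.br_zero_right]
    rcases hsimple _ hker with hbot | htop
    · rw [RingHom.injective_iff_ker_eq_bot]
      exact hbot
    · exfalso
      have h1 : (1 : AddMonoidAlgebra 𝕜 (Fin n → ℤ)) ∈ RingHom.ker
          (f : AddMonoidAlgebra 𝕜 (Fin n → ℤ) →+* AddMonoidAlgebra 𝕜 (Fin n → ℤ)) := by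
        rw [htop]; trivial
      rw [RingHom.mem_ker] at h1
      have : (1 : AddMonoidAlgebra 𝕜 (Fin n → ℤ)) = 0 := by
        rw [← map_one f]; exact h1
      exact one_ne_zero this
  exact ⟨hinj, hsurj⟩
end

section
/- Let 𝕜 be a field of characteristic zero and Λ = (λ_ij) ∈ M_n(𝕜) a skew-symmetric matrix. The following are equivalent for the Poisson torus L_Λ(𝕜): (1) L_Λ(𝕜) is Poisson simple; (2) the Poisson center of L_Λ(𝕜) equals 𝕜·1; (3) there does not exist a nonzero tuple a = (a_1,…,a_n) ∈ ℤ^n such that Σ_{i=1}^n a_i λ_ij = 0 for all j = 1,…,n. -/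
open scoped TensorProduct

namespace PTaux

section general
variable {𝕜 A : Type*} [CommRing 𝕜] [CommRing A] [Algebra 𝕜 A] (P : PoissonStructure 𝕜 A)

/-- bracket with fixed right argument, as a linear map -/
def brL (g : A) : A →ₗ[𝕜] A where
  toFun f := P.bracket f g
  map_add' a b := P.add_left a b g
  map_smul' r a := P.smul_left r a g

lemma br_zero_left (g : A) : P.bracket 0 g = 0 := (brL P g).map_zero

lemma br_one_right (f : A) : P.bracket f 1 = 0 := by
  have := P.leibniz f 1 1
  rw [mul_one, one_mul] at this
  linear_combination -this

lemma br_one_left (g : A) : P.bracket 1 g = 0 := by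
  rw [P.antisymm, br_one_right, neg_zero]

lemma br_sub_right (f a b : A) : P.bracket f (a - b) = P.bracket f a - P.bracket f b := by
  have hadd : ∀ x y : A, P.bracket f (x + y) = P.bracket f x + P.bracket f y := by
    intro x y
    rw [P.antisymm, P.add_left, P.antisymm x f, P.antisymm y f]; ring
  have h : P.bracket f (a - b + b) = P.bracket f a := by ring_nf
  rw [hadd] at h
  linear_combination h

end general

section torus
variable {𝕜 : Type*} [Field 𝕜] {n : ℕ}

def bform (Λ : Matrix (Fin n) (Fin n) 𝕜) (u v : Fin n → ℤ) : 𝕜 :=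
  ∑ i, ∑ j, (u i : 𝕜) * Λ i j * (v j : 𝕜)

lemma bform_skew {Λ : Matrix (Fin n) (Fin n) 𝕜} (hskew : Λ.transpose = -Λ)
    (u v : Fin n → ℤ) : bform Λ u v = - bform Λ v u := by
  unfold bform
  rw [Finset.sum_comm, ← Finset.sum_neg_distrib]
  refine Finset.sum_congr rfl fun i _ => ?_
  rw [← Finset.sum_neg_distrib]
  refine Finset.sum_congr rfl fun j _ => ?_
  have h : Λ j i = -Λ i j := by
    have := congrFun (congrFun hskew i) j
    simpa [Matrix.transpose_apply] using this
  rw [h]; ring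

lemma bform_sub_right (Λ : Matrix (Fin n) (Fin n) 𝕜) (v a b : Fin n → ℤ) :
    bform Λ v (a - b) = bform Λ v a - bform Λ v b := by
  unfold bform
  rw [← Finset.sum_sub_distrib]
  refine Finset.sum_congr rfl fun i _ => ?_
  rw [← Finset.sum_sub_distrib]
  refine Finset.sum_congr rfl fun j _ => ?_
  push_cast [Pi.sub_apply]
  ring

lemma bform_single_right (Λ : Matrix (Fin n) (Fin n) 𝕜) (u : Fin n → ℤ) (j : Fin n) :
    bform Λ u (Pi.single j 1) = ∑ i, (u i : 𝕜) * Λ i j := by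
  unfold bform
  refine Finset.sum_congr rfl fun i _ => ?_
  rw [Finset.sum_eq_single j]
  · simp
  · intro k _ hk
    simp [Pi.single_apply, hk]
  · simp

lemma bform_left_eq_zero {Λ : Matrix (Fin n) (Fin n) 𝕜} {a : Fin n → ℤ}
    (ha : ∀ j, (∑ i, (a i : 𝕜) * Λ i j) = 0) (u : Fin n → ℤ) : bform Λ a u = 0 := by
  unfold bform
  rw [Finset.sum_comm]
  refine Finset.sum_eq_zero fun j _ => ?_
  rw [← Finset.sum_mul, ha j, zero_mul]

lemma repr_eq (f : AddMonoidAlgebra 𝕜 (Fin n → ℤ)) :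
    f = ∑ u ∈ f.coeff.support, f.coeff u • AddMonoidAlgebra.single u (1 : 𝕜) := by
  conv_lhs => rw [← AddMonoidAlgebra.sum_coeff_single f]
  rw [Finsupp.sum]
  refine Finset.sum_congr rfl fun u _ => ?_
  rw [AddMonoidAlgebra.smul_single', mul_one]

variable {Λ : Matrix (Fin n) (Fin n) 𝕜}
  {P : PoissonStructure 𝕜 (AddMonoidAlgebra 𝕜 (Fin n → ℤ))}

lemma br_single_right' (hP : IsTorusBracket n Λ P)
    (f : AddMonoidAlgebra 𝕜 (Fin n → ℤ)) (v : Fin n → ℤ) :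
    P.bracket f (AddMonoidAlgebra.single v (1 : 𝕜)) =
      ∑ u ∈ f.coeff.support, (f.coeff u * bform Λ u v) • AddMonoidAlgebra.single (u + v) (1 : 𝕜) := by
  have h0 : P.bracket f (AddMonoidAlgebra.single v (1 : 𝕜)) =
      brL P (AddMonoidAlgebra.single v (1 : 𝕜))
        (∑ u ∈ f.coeff.support, f.coeff u • AddMonoidAlgebra.single u (1 : 𝕜)) := by
    rw [← repr_eq f]; rfl
  rw [h0, map_sum]
  refine Finset.sum_congr rfl fun u _ => ?_
  rw [map_smul]
  have h1 : brL P (AddMonoidAlgebra.single v (1 : 𝕜)) (AddMonoidAlgebra.single u (1 : 𝕜)) =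
      bform Λ u v • AddMonoidAlgebra.single (u + v) (1 : 𝕜) := hP u v
  rw [h1, smul_smul]

lemma single_mul (f : AddMonoidAlgebra 𝕜 (Fin n → ℤ)) (v : Fin n → ℤ) :
    AddMonoidAlgebra.single v (1 : 𝕜) * f =
      ∑ u ∈ f.coeff.support, f.coeff u • AddMonoidAlgebra.single (u + v) (1 : 𝕜) := by
  have h0 : AddMonoidAlgebra.single v (1 : 𝕜) * f =
      ∑ u ∈ f.coeff.support, AddMonoidAlgebra.single v (1 : 𝕜) *
        (f.coeff u • AddMonoidAlgebra.single u (1 : 𝕜)) := by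
    rw [← Finset.mul_sum, ← repr_eq f]
  rw [h0]
  refine Finset.sum_congr rfl fun u _ => ?_
  rw [mul_smul_comm, AddMonoidAlgebra.single_mul_single, one_mul, add_comm v u]

lemma eval_sum (s : Finset (Fin n → ℤ)) (c : (Fin n → ℤ) → 𝕜) (v u0 : Fin n → ℤ)
    (h : u0 ∈ s) :
    (∑ u ∈ s, c u • AddMonoidAlgebra.single (u + v) (1 : 𝕜)).coeff (u0 + v) = c u0 := by
  classical
  rw [AddMonoidAlgebra.coeff_sum, Finsupp.finset_sum_apply]
  rw [Finset.sum_eq_single u0]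
  · rw [AddMonoidAlgebra.coeff_smul, Finsupp.smul_apply, AddMonoidAlgebra.coeff_single, Finsupp.single_apply, if_pos rfl, smul_eq_mul, mul_one]
  · intro u _ hu
    rw [AddMonoidAlgebra.coeff_smul, Finsupp.smul_apply, AddMonoidAlgebra.coeff_single, Finsupp.single_apply, if_neg, smul_zero]
    exact fun hc => hu (by simpa using add_right_cancel hc)
  · exact fun h' => absurd h h'

/-- a monomial `x^a` with `Σᵢ aᵢ λᵢⱼ = 0` for all `j` is Poisson central. -/
lemma central_monomial (hskew : Λ.transpose = -Λ) (hP : IsTorusBracket n Λ P)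
    {a : Fin n → ℤ} (ha : ∀ j, (∑ i, (a i : 𝕜) * Λ i j) = 0)
    (x : AddMonoidAlgebra 𝕜 (Fin n → ℤ)) :
    P.bracket (AddMonoidAlgebra.single a (1 : 𝕜)) x = 0 := by
  rw [P.antisymm, br_single_right' hP x a, Finset.sum_eq_zero, neg_zero]
  intro u _
  rw [bform_skew hskew, bform_left_eq_zero ha, neg_zero, mul_zero, zero_smul]

end torus

end PTaux

namespace PTaux

section directions
variable {𝕜 : Type*} [Field 𝕜] {n : ℕ}
  {Λ : Matrix (Fin n) (Fin n) 𝕜}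
  {P : PoissonStructure 𝕜 (AddMonoidAlgebra 𝕜 (Fin n → ℤ))}

/-- If there is a relation, the Poisson center is nontrivial. -/
lemma rel_not_center (hskew : Λ.transpose = -Λ) (hP : IsTorusBracket n Λ P)
    (hrel : ∃ a : Fin n → ℤ, a ≠ 0 ∧ ∀ j, (∑ i, (a i : 𝕜) * Λ i j) = 0) :
    ¬ (∀ z : AddMonoidAlgebra 𝕜 (Fin n → ℤ), (∀ x, P.bracket z x = 0) →
        ∃ c : 𝕜, z = algebraMap 𝕜 (AddMonoidAlgebra 𝕜 (Fin n → ℤ)) c) := by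
  obtain ⟨a, ha0, ha⟩ := hrel
  intro hcen
  obtain ⟨c, hc⟩ := hcen (AddMonoidAlgebra.single a (1 : 𝕜))
    (central_monomial hskew hP ha)
  rw [AddMonoidAlgebra.coe_algebraMap] at hc
  have h1 := congrArg (fun f : AddMonoidAlgebra 𝕜 (Fin n → ℤ) => f.coeff a) hc
  simp only [Function.comp_apply] at h1
  rw [AddMonoidAlgebra.coeff_single, AddMonoidAlgebra.coeff_single, Finsupp.single_eq_same, Finsupp.single_eq_of_ne ha0] at h1
  exact one_ne_zero h1

/-- If there is a relation, the Poisson torus is not Poisson simple. -/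
lemma rel_not_simple (hskew : Λ.transpose = -Λ) (hP : IsTorusBracket n Λ P)
    (hrel : ∃ a : Fin n → ℤ, a ≠ 0 ∧ ∀ j, (∑ i, (a i : 𝕜) * Λ i j) = 0) :
    ¬ IsPoissonSimple P := by
  obtain ⟨a, ha0, ha⟩ := hrel
  intro hsimp
  set g : AddMonoidAlgebra 𝕜 (Fin n → ℤ) := AddMonoidAlgebra.single a (1 : 𝕜) - 1 with hg
  have hbr : ∀ x : AddMonoidAlgebra 𝕜 (Fin n → ℤ), P.bracket x g = 0 := by
    intro x
    rw [hg, br_sub_right, br_one_right, P.antisymm, central_monomial hskew hP ha,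
      neg_zero, sub_zero]
  have hPois : ∀ x : AddMonoidAlgebra 𝕜 (Fin n → ℤ),
      ∀ y ∈ Ideal.span {g}, P.bracket x y ∈ Ideal.span {g} := by
    intro x y hy
    obtain ⟨q, hq⟩ := Ideal.mem_span_singleton'.mp hy
    rw [← hq, P.leibniz, hbr x, mul_zero, add_zero]
    exact Ideal.mem_span_singleton'.mpr ⟨P.bracket x q, rfl⟩
  rcases hsimp (Ideal.span {g}) hPois with hbot | htop
  · have hmem : g ∈ Ideal.span {g} := Ideal.subset_span rfl
    rw [hbot, Ideal.mem_bot] at hmem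
    have h1 := congrArg (fun f : AddMonoidAlgebra 𝕜 (Fin n → ℤ) => f.coeff a) (sub_eq_zero.mp hmem)
    rw [AddMonoidAlgebra.one_def] at h1
    rw [AddMonoidAlgebra.coeff_single, AddMonoidAlgebra.coeff_single, Finsupp.single_eq_same, Finsupp.single_eq_of_ne ha0] at h1
    exact one_ne_zero h1
  · have hone : (1 : AddMonoidAlgebra 𝕜 (Fin n → ℤ)) ∈ Ideal.span {g} := by
      rw [htop]; exact Submodule.mem_top
    obtain ⟨q, hq⟩ := Ideal.mem_span_singleton'.mp hone
    set φ : AddMonoidAlgebra 𝕜 (Fin n → ℤ) →ₐ[𝕜] 𝕜 :=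
      AddMonoidAlgebra.lift 𝕜 𝕜 (Fin n → ℤ) 1 with hφ
    have hφg : φ g = 0 := by
      rw [hg, map_sub, map_one, hφ, AddMonoidAlgebra.lift_single]
      simp
    have := congrArg φ hq
    rw [map_mul, hφg, mul_zero, map_one] at this
    exact one_ne_zero this.symm

/-- If there is no relation, the Poisson center is trivial. -/
lemma nrel_center (hP : IsTorusBracket n Λ P)
    (hnr : ¬ ∃ a : Fin n → ℤ, a ≠ 0 ∧ ∀ j, (∑ i, (a i : 𝕜) * Λ i j) = 0) :
    ∀ z : AddMonoidAlgebra 𝕜 (Fin n → ℤ), (∀ x, P.bracket z x = 0) →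
      ∃ c : 𝕜, z = algebraMap 𝕜 (AddMonoidAlgebra 𝕜 (Fin n → ℤ)) c := by
  intro z hz
  have hsupp : z.coeff.support ⊆ {0} := by
    intro u0 hu0
    rw [Finset.mem_singleton]
    by_contra hu0ne
    refine hnr ⟨u0, hu0ne, fun j => ?_⟩
    have h0 := hz (AddMonoidAlgebra.single (Pi.single j 1) (1 : 𝕜))
    rw [br_single_right' hP z (Pi.single j 1)] at h0
    have he := eval_sum z.coeff.support (fun u => z.coeff u * bform Λ u (Pi.single j 1))
      (Pi.single j 1) u0 hu0
    rw [h0] at he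
    have hz0 : z.coeff u0 ≠ 0 := Finsupp.mem_support_iff.mp hu0
    have : z.coeff u0 * bform Λ u0 (Pi.single j 1) = 0 := by
      have happ : (0 : AddMonoidAlgebra 𝕜 (Fin n → ℤ)).coeff (u0 + Pi.single j 1) = 0 := rfl
      rw [happ] at he
      exact he.symm
    rw [← bform_single_right Λ u0 j]
    exact (mul_eq_zero.mp this).resolve_left hz0
  refine ⟨z.coeff 0, ?_⟩
  rw [AddMonoidAlgebra.coe_algebraMap]
  simp only [Function.comp_apply, Algebra.algebraMap_self_apply]
  exact AddMonoidAlgebra.coeff_injective (Finsupp.support_subset_singleton.mp hsupp)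

/-- If there is no relation, the Poisson torus is Poisson simple. -/
lemma nrel_simple (hskew : Λ.transpose = -Λ) (hP : IsTorusBracket n Λ P)
    (hnr : ¬ ∃ a : Fin n → ℤ, a ≠ 0 ∧ ∀ j, (∑ i, (a i : 𝕜) * Λ i j) = 0) :
    IsPoissonSimple P := by
  intro I hI
  by_cases hbot : I = ⊥
  · exact Or.inl hbot
  refine Or.inr ?_
  obtain ⟨z, hzI, hz⟩ := Submodule.exists_mem_ne_zero_of_ne_bot hbot
  rw [Ideal.eq_top_iff_one]
  have key : ∀ k : ℕ, ∀ z : AddMonoidAlgebra 𝕜 (Fin n → ℤ),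
      z ∈ I → z ≠ 0 → z.coeff.support.card ≤ k → (1 : AddMonoidAlgebra 𝕜 (Fin n → ℤ)) ∈ I := by
    intro k
    induction k with
    | zero =>
      intro z hzI hz hc
      exact absurd (AddMonoidAlgebra.coeff_eq_zero.mp (Finsupp.card_support_eq_zero.mp (Nat.le_zero.mp hc))) hz
    | succ k ih =>
      intro z hzI hz hc
      rcases Nat.lt_or_ge z.coeff.support.card 2 with hlt | hge
      · -- support is a single point: `z` is a unit times a monomial
        have hcard1 : z.coeff.support.card = 1 := by
          have h0 : z.coeff.support.card ≠ 0 := fun h => hz (AddMonoidAlgebra.coeff_eq_zero.mp (Finsupp.card_support_eq_zero.mp h))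
          omega
        obtain ⟨u0, hu0⟩ := Finset.card_eq_one.mp hcard1
        obtain ⟨hz0, hzs⟩ := Finsupp.support_eq_singleton.mp hu0
        have hzs' : z = AddMonoidAlgebra.single u0 (z.coeff u0) :=
          AddMonoidAlgebra.coeff_injective hzs
        have hmul : AddMonoidAlgebra.single (-u0) ((z.coeff u0)⁻¹) * z =
            (1 : AddMonoidAlgebra 𝕜 (Fin n → ℤ)) := by
          nth_rewrite 2 [hzs']
          rw [AddMonoidAlgebra.single_mul_single, neg_add_cancel,
            inv_mul_cancel₀ hz0, AddMonoidAlgebra.one_def]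
        exact hmul ▸ Ideal.mul_mem_left I _ hzI
      · -- support has at least two points: shrink it
        obtain ⟨u0, hu0, u1, hu1, hne⟩ := Finset.one_lt_card.mp hge
        have hane : u1 - u0 ≠ 0 := sub_ne_zero.mpr hne.symm
        push_neg at hnr
        obtain ⟨j, hj⟩ := hnr (u1 - u0) hane
        set v : Fin n → ℤ := Pi.single j 1 with hv
        have hb1 : bform Λ (u1 - u0) v ≠ 0 := by
          rw [hv, bform_single_right]; exact hj
        have hb2 : bform Λ v (u1 - u0) ≠ 0 := by
          rw [bform_skew hskew]
          exact neg_ne_zero.mpr hb1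
        set ev : AddMonoidAlgebra 𝕜 (Fin n → ℤ) := AddMonoidAlgebra.single v (1 : 𝕜) with hev
        set w : AddMonoidAlgebra 𝕜 (Fin n → ℤ) :=
          P.bracket ev z - bform Λ v u0 • (ev * z) with hw
        have hwI : w ∈ I := by
          refine Submodule.sub_mem I (hI ev z hzI) ?_
          rw [Algebra.smul_def]
          exact Ideal.mul_mem_left I _ (Ideal.mul_mem_left I _ hzI)
        have hwf : w = ∑ u ∈ z.coeff.support,
            (z.coeff u * (bform Λ v u - bform Λ v u0)) • AddMonoidAlgebra.single (u + v) (1 : 𝕜) := by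
          rw [hw]
          have h1 : P.bracket ev z = ∑ u ∈ z.coeff.support,
              (z.coeff u * bform Λ v u) • AddMonoidAlgebra.single (u + v) (1 : 𝕜) := by
            rw [hev, P.antisymm, br_single_right' hP z v, ← Finset.sum_neg_distrib]
            refine Finset.sum_congr rfl fun u _ => ?_
            rw [← neg_smul, bform_skew hskew u v]
            ring_nf
          have h2 : bform Λ v u0 • (ev * z) = ∑ u ∈ z.coeff.support,
              (bform Λ v u0 * z.coeff u) • AddMonoidAlgebra.single (u + v) (1 : 𝕜) := by
            rw [hev, single_mul z v, Finset.smul_sum]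
            refine Finset.sum_congr rfl fun u _ => ?_
            rw [smul_smul]
          rw [h1, h2, ← Finset.sum_sub_distrib]
          refine Finset.sum_congr rfl fun u _ => ?_
          rw [← sub_smul]
          ring_nf
        have hw1 : w.coeff (u1 + v) = z.coeff u1 * (bform Λ v u1 - bform Λ v u0) := by
          rw [hwf]
          exact eval_sum z.coeff.support _ v u1 hu1
        have hw1ne : w.coeff (u1 + v) ≠ 0 := by
          rw [hw1, ← bform_sub_right]
          exact mul_ne_zero (Finsupp.mem_support_iff.mp hu1) hb2
        have hwne : w ≠ 0 := by
          intro h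
          rw [h] at hw1ne
          exact hw1ne rfl
        have hw0 : w.coeff (u0 + v) = 0 := by
          rw [hwf, eval_sum z.coeff.support _ v u0 hu0, sub_self, mul_zero]
        have hsupw : w.coeff.support ⊆ (z.coeff.support.image (· + v)).erase (u0 + v) := by
          intro x hx
          rw [Finset.mem_erase]
          constructor
          · intro hxe
            rw [hxe] at hx
            exact Finsupp.mem_support_iff.mp hx hw0
          · have : w.coeff.support ⊆ z.coeff.support.image (· + v) := by
              rw [hwf]
              rw [AddMonoidAlgebra.coeff_sum]
              refine (Finsupp.support_finset_sum).trans ?_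
              intro y hy
              rw [Finset.mem_biUnion] at hy
              obtain ⟨u, hu, hyu⟩ := hy
              rw [AddMonoidAlgebra.coeff_smul] at hyu
              have := Finsupp.support_smul hyu
              have h2 := Finsupp.support_single_subset this
              rw [Finset.mem_singleton] at h2
              exact Finset.mem_image.mpr ⟨u, hu, h2.symm⟩
            exact this hx
        have hcardw : w.coeff.support.card ≤ k := by
          have h1 : ((z.coeff.support.image (· + v)).erase (u0 + v)).card ≤ k := by
            rw [Finset.card_erase_of_mem
              (Finset.mem_image.mpr ⟨u0, hu0, rfl⟩)]
            have himg : (z.coeff.support.image (· + v)).card ≤ k + 1 :=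
              le_trans (Finset.card_image_le) hc
            omega
          exact le_trans (Finset.card_le_card hsupw) h1
        exact ih w hwI hwne hcardw
  exact key z.coeff.support.card z hzI hz le_rfl

end directions

end PTaux

/-- Lemma 2.7: for a Poisson torus `L_Λ(𝕜)`, Poisson simplicity, triviality of the Poisson
center, and nonexistence of a nonzero integer vector `a` with `Σᵢ aᵢ λᵢⱼ = 0` for all `j`
are equivalent. -/
theorem poissonTorus_simple_iff_center_trivial_iff_no_integer_relation
    {𝕜 : Type*} [Field 𝕜] [CharZero 𝕜] (n : ℕ) (Λ : Matrix (Fin n) (Fin n) 𝕜)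
    (hskew : Λ.transpose = -Λ)
    (P : PoissonStructure 𝕜 (AddMonoidAlgebra 𝕜 (Fin n → ℤ)))
    (hP : IsTorusBracket n Λ P) :
    (IsPoissonSimple P ↔
      ∀ z : AddMonoidAlgebra 𝕜 (Fin n → ℤ), (∀ x, P.bracket z x = 0) →
        ∃ c : 𝕜, z = algebraMap 𝕜 (AddMonoidAlgebra 𝕜 (Fin n → ℤ)) c) ∧
    (IsPoissonSimple P ↔
      ¬ ∃ a : Fin n → ℤ, a ≠ 0 ∧ ∀ j, (∑ i, (a i : 𝕜) * Λ i j) = 0) := by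
  constructor
  · constructor
    · intro hs
      exact PTaux.nrel_center hP fun hrel => PTaux.rel_not_simple hskew hP hrel hs
    · intro hcen
      exact PTaux.nrel_simple hskew hP fun hrel => PTaux.rel_not_center hskew hP hrel hcen
  · exact ⟨fun hs hrel => PTaux.rel_not_simple hskew hP hrel hs, PTaux.nrel_simple hskew hP⟩
end

section
/- Let 𝕜 be a field of characteristic zero, A a Poisson 𝕜-algebra which is an integral domain, and K a commutative 𝕜-algebra which is a field, regarded as a Poisson algebra with identically zero bracket. Let B = A ⊗_𝕜 K with the tensor Poisson bracket (so {a⊗s, a'⊗s'} = {a,a'} ⊗ ss'), regarded as a Poisson algebra over K. If every injective K-algebra endomorphism of B which preserves the bracket is bijective, then A is Dixmier as a Poisson 𝕜-algebra. -/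
open scoped TensorProduct

attribute [local instance] Algebra.TensorProduct.rightAlgebra in
/-- Proposition 4.9(1): if `B = A ⊗ K` is Dixmier as a Poisson algebra over `K`
(where `K` carries the trivial bracket), then `A` is Dixmier over `𝕜`. -/
theorem dixmier_of_baseChange_dixmier
    {𝕜 A K : Type*} [Field 𝕜] [CharZero 𝕜]
    [CommRing A] [IsDomain A] [Algebra 𝕜 A]
    [Field K] [Algebra 𝕜 K]
    (PA : PoissonStructure 𝕜 A)
    (PB : PoissonStructure K (A ⊗[𝕜] K))
    (hPB : ∀ (a a' : A) (s s' : K),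
      PB.bracket (a ⊗ₜ[𝕜] s) (a' ⊗ₜ[𝕜] s') = PA.bracket a a' ⊗ₜ[𝕜] (s * s'))
    (hB : ∀ g : (A ⊗[𝕜] K) →ₐ[K] A ⊗[𝕜] K,
      (∀ x y, g (PB.bracket x y) = PB.bracket (g x) (g y)) →
      Function.Injective g → Function.Bijective g) :
    IsDixmier 𝕜 A PA := by
  intro f hf hinj
  refine ⟨hinj, ?_⟩
  -- bracket auxiliary lemmas for PB
  have hadd_left : ∀ x y z : A ⊗[𝕜] K,
      PB.bracket (x + y) z = PB.bracket x z + PB.bracket y z := PB.add_left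
  have hadd_right : ∀ x y z : A ⊗[𝕜] K,
      PB.bracket x (y + z) = PB.bracket x y + PB.bracket x z := by
    intro x y z
    rw [PB.antisymm, PB.add_left, PB.antisymm y x, PB.antisymm z x]; ring
  have hzero_left : ∀ z : A ⊗[𝕜] K, PB.bracket 0 z = 0 := by
    intro z
    have := PB.add_left 0 0 z
    simpa using this.symm
  have hzero_right : ∀ z : A ⊗[𝕜] K, PB.bracket z 0 = 0 := by
    intro z; rw [PB.antisymm, hzero_left, neg_zero]
  -- the extended map
  let G := Algebra.TensorProduct.map f (AlgHom.id 𝕜 K)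
  let g : (A ⊗[𝕜] K) →ₐ[K] A ⊗[𝕜] K :=
    { toRingHom := G.toRingHom, commutes' := by
        intro s
        show G ((1 : A) ⊗ₜ s) = (1 : A) ⊗ₜ s
        simp [G] }
  have hg : ∀ (a : A) (s : K), g (a ⊗ₜ s) = f a ⊗ₜ s := by intro a s; simp [g, G]
  -- g is a Poisson morphism
  have hgP : ∀ x y, g (PB.bracket x y) = PB.bracket (g x) (g y) := by
    intro x y
    induction x using TensorProduct.induction_on with
    | zero => simp [hzero_left]
    | tmul a s =>
      induction y using TensorProduct.induction_on with
      | zero => simp [hzero_right]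
      | tmul a' s' =>
        rw [hPB, hg, hg, hg, hPB, hf]
      | add y z ihy ihz =>
        rw [hadd_right, map_add, ihy, ihz, map_add, hadd_right]
    | add x z ihx ihz =>
      rw [hadd_left, map_add, ihx, ihz, map_add, hadd_left]
  -- g is injective
  have hGlin : (G : A ⊗[𝕜] K →ₗ[𝕜] A ⊗[𝕜] K) = LinearMap.rTensor K f.toLinearMap := by
    ext a s; simp [G]
  have hginj : Function.Injective g := by
    show Function.Injective G
    have h := Module.Flat.rTensor_preserves_injective_linearMap (M := K) f.toLinearMap hinj
    rw [← hGlin] at h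
    exact h
  have hgbij := hB g hgP hginj
  -- deduce surjectivity of f
  intro b
  obtain ⟨x, hx⟩ := hgbij.2 (b ⊗ₜ (1 : K))
  set Q := A ⧸ LinearMap.range f.toLinearMap
  let π : A →ₗ[𝕜] Q := (LinearMap.range f.toLinearMap).mkQ
  have hπf : π.comp f.toLinearMap = 0 := by
    ext a
    rw [LinearMap.comp_apply, LinearMap.zero_apply, Submodule.mkQ_apply,
      Submodule.Quotient.mk_eq_zero]
    exact LinearMap.mem_range_self _ a
  have hπb : (LinearMap.rTensor K π) (b ⊗ₜ (1 : K)) = 0 := by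
    rw [← hx]
    have : (LinearMap.rTensor K π) (G x) =
        ((LinearMap.rTensor K π).comp (LinearMap.rTensor K f.toLinearMap)) x := by
      rw [LinearMap.comp_apply, ← hGlin]; rfl
    rw [show g x = G x from rfl, this, ← LinearMap.rTensor_comp, hπf]
    simp
  -- injectivity of q ↦ q ⊗ 1 on Q
  have hQ : ∀ q : Q, q ⊗ₜ[𝕜] (1 : K) = 0 → q = 0 := by
    intro q hq
    have hinj1 : Function.Injective
        (LinearMap.lTensor Q (Algebra.linearMap 𝕜 K)) :=
      Module.Flat.lTensor_preserves_injective_linearMap _ (algebraMap 𝕜 K).injective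
    have h0 : (LinearMap.lTensor Q (Algebra.linearMap 𝕜 K)) (q ⊗ₜ (1 : 𝕜)) =
        (LinearMap.lTensor Q (Algebra.linearMap 𝕜 K)) 0 := by
      simpa using hq
    have h2 : q ⊗ₜ[𝕜] (1 : 𝕜) = (0 : Q ⊗[𝕜] 𝕜) := hinj1 h0
    have := congrArg (TensorProduct.rid 𝕜 Q) h2
    simpa using this
  have : π b = 0 := by
    apply hQ
    simpa using hπb
  have : b ∈ LinearMap.range f.toLinearMap := by
    rwa [← Submodule.Quotient.mk_eq_zero]
  obtain ⟨a, ha⟩ := this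
  exact ⟨a, ha⟩
end

section
/- Let 𝕜 be a field of characteristic zero, A and R Poisson 𝕜-algebras which are integral domains, and K a commutative 𝕜-algebra which is a field, regarded as a Poisson algebra with identically zero bracket. Let B = A ⊗_𝕜 K with the tensor Poisson bracket, regarded as a Poisson algebra over K, and let S = R ⊗_𝕜 K similarly. If every injective bracket-preserving K-algebra morphism g : B → B ⊗_K S has image equal to B ⊗ 1 (i.e., B is S-Dixmier as a Poisson K-algebra), then every injective Poisson 𝕜-algebra morphism f : A → A ⊗_𝕜 R has image A ⊗ 𝕜·1 (i.e., A is R-Dixmier as a Poisson 𝕜-algebra). -/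
open scoped TensorProduct

namespace PoissonStructure
variable {𝕜 A : Type*} [CommRing 𝕜] [CommRing A] [Algebra 𝕜 A] (P : PoissonStructure 𝕜 A)

lemma zero_left (y : A) : P.bracket 0 y = 0 := by
  have h := P.add_left 0 0 y
  rw [add_zero] at h
  exact left_eq_add.mp h

lemma zero_right (x : A) : P.bracket x 0 = 0 := by
  rw [P.antisymm, P.zero_left, neg_zero]

lemma add_right (x y z : A) : P.bracket x (y + z) = P.bracket x y + P.bracket x z := by
  rw [P.antisymm x (y + z), P.add_left, neg_add, ← P.antisymm, ← P.antisymm]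

end PoissonStructure

lemma exists_phi (𝕜 K : Type*) [Field 𝕜] [Ring K] [Nontrivial K] [Module 𝕜 K] :
    ∃ φ : K →ₗ[𝕜] 𝕜, φ 1 = 1 := by
  have h : ¬ ∀ φ : Module.Dual 𝕜 K, φ (1 : K) = 0 := by
    rw [Module.forall_dual_apply_eq_zero_iff]
    exact one_ne_zero
  push_neg at h
  obtain ⟨φ, hφ⟩ := h
  exact ⟨(φ 1)⁻¹ • φ, by simp [inv_mul_cancel₀ hφ]⟩

section AuxDefs
attribute [local instance] Algebra.TensorProduct.rightAlgebra

variable (𝕜 K : Type*) [CommRing 𝕜] [CommRing K] [Algebra 𝕜 K]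

/-- Extend a `𝕜`-algebra hom `X → C` to a `K`-algebra hom `X ⊗[𝕜] K → C`. -/
noncomputable def extendRight {X C : Type*} [CommRing X] [Algebra 𝕜 X]
    [CommRing C] [Algebra 𝕜 C] [Algebra K C] [IsScalarTower 𝕜 K C]
    (F : X →ₐ[𝕜] C) : X ⊗[𝕜] K →ₐ[K] C :=
  { Algebra.TensorProduct.productMap F (IsScalarTower.toAlgHom 𝕜 K C) with
    commutes' := fun s => by
      show Algebra.TensorProduct.productMap F (IsScalarTower.toAlgHom 𝕜 K C)
        ((1 : X) ⊗ₜ[𝕜] s) = _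
      simp [Algebra.TensorProduct.productMap_apply_tmul] }

@[simp] lemma extendRight_tmul {X C : Type*} [CommRing X] [Algebra 𝕜 X]
    [CommRing C] [Algebra 𝕜 C] [Algebra K C] [IsScalarTower 𝕜 K C]
    (F : X →ₐ[𝕜] C) (x : X) (s : K) :
    extendRight 𝕜 K F (x ⊗ₜ[𝕜] s) = F x * algebraMap K C s := rfl

variable (A R : Type*) [CommRing A] [Algebra 𝕜 A] [CommRing R] [Algebra 𝕜 R]

/-- `a ⊗ r ↦ (a ⊗ 1) ⊗ (r ⊗ 1)`. -/
noncomputable def g0 : A ⊗[𝕜] R →ₐ[𝕜] (A ⊗[𝕜] K) ⊗[K] (R ⊗[𝕜] K) :=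
  Algebra.TensorProduct.productMap
    (((Algebra.TensorProduct.includeLeft :
        (A ⊗[𝕜] K) →ₐ[K] (A ⊗[𝕜] K) ⊗[K] (R ⊗[𝕜] K)).restrictScalars 𝕜).comp
      (Algebra.TensorProduct.includeLeft : A →ₐ[𝕜] A ⊗[𝕜] K))
    (((Algebra.TensorProduct.includeRight :
        (R ⊗[𝕜] K) →ₐ[K] (A ⊗[𝕜] K) ⊗[K] (R ⊗[𝕜] K)).restrictScalars 𝕜).comp
      (Algebra.TensorProduct.includeLeft : R →ₐ[𝕜] R ⊗[𝕜] K))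

@[simp] lemma g0_tmul (a : A) (r : R) :
    g0 𝕜 K A R (a ⊗ₜ[𝕜] r) = (a ⊗ₜ[𝕜] (1 : K)) ⊗ₜ[K] (r ⊗ₜ[𝕜] (1 : K)) := by
  simp [g0, Algebra.TensorProduct.productMap_apply_tmul, Algebra.TensorProduct.one_def,
    Algebra.TensorProduct.tmul_mul_tmul]

lemma algebraMapT (s : K) :
    algebraMap K ((A ⊗[𝕜] K) ⊗[K] (R ⊗[𝕜] K)) s
      = ((1 : A) ⊗ₜ[𝕜] s) ⊗ₜ[K] (1 : R ⊗[𝕜] K) := rfl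

lemma g0_tmul_mul (a : A) (r : R) (s : K) :
    g0 𝕜 K A R (a ⊗ₜ[𝕜] r) * algebraMap K _ s
      = (a ⊗ₜ[𝕜] s) ⊗ₜ[K] (r ⊗ₜ[𝕜] (1 : K)) := by
  rw [g0_tmul, algebraMapT, Algebra.TensorProduct.tmul_mul_tmul,
    Algebra.TensorProduct.tmul_mul_tmul, mul_one, one_mul, mul_one]

/-- `(a ⊗ s) ⊗ (r ⊗ t) ↦ (a ⊗ r) ⊗ (s * t)`. -/
noncomputable def theta : (A ⊗[𝕜] K) ⊗[K] (R ⊗[𝕜] K) →ₐ[K] (A ⊗[𝕜] R) ⊗[𝕜] K :=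
  Algebra.TensorProduct.productMap
    (extendRight 𝕜 K ((Algebra.TensorProduct.includeLeft :
        (A ⊗[𝕜] R) →ₐ[𝕜] (A ⊗[𝕜] R) ⊗[𝕜] K).comp
      (Algebra.TensorProduct.includeLeft : A →ₐ[𝕜] A ⊗[𝕜] R)))
    (extendRight 𝕜 K ((Algebra.TensorProduct.includeLeft :
        (A ⊗[𝕜] R) →ₐ[𝕜] (A ⊗[𝕜] R) ⊗[𝕜] K).comp
      (Algebra.TensorProduct.includeRight : R →ₐ[𝕜] A ⊗[𝕜] R)))

@[simp] lemma theta_tmul (a : A) (s : K) (r : R) (t : K) :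
    theta 𝕜 K A R ((a ⊗ₜ[𝕜] s) ⊗ₜ[K] (r ⊗ₜ[𝕜] t)) = (a ⊗ₜ[𝕜] r) ⊗ₜ[𝕜] (s * t) := by
  have hC : ∀ u : K, algebraMap K ((A ⊗[𝕜] R) ⊗[𝕜] K) u = (1 : A ⊗[𝕜] R) ⊗ₜ[𝕜] u := fun _ => rfl
  simp [theta, Algebra.TensorProduct.productMap_apply_tmul, hC,
    Algebra.TensorProduct.one_def, Algebra.TensorProduct.tmul_mul_tmul]

lemma theta_g0 (x : A ⊗[𝕜] R) :
    theta 𝕜 K A R (g0 𝕜 K A R x) = x ⊗ₜ[𝕜] (1 : K) := by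
  induction x using TensorProduct.induction_on with
  | zero => simp
  | tmul a r => simp
  | add x y hx hy => rw [map_add, map_add, hx, hy, TensorProduct.add_tmul]

end AuxDefs

set_option maxHeartbeats 1600000 in
attribute [local instance] Algebra.TensorProduct.rightAlgebra in
/-- Proposition 4.9(2): if `B = A ⊗ K` is `(R ⊗ K)`-Dixmier as a Poisson algebra over `K`
(where `K` carries the trivial bracket), then `A` is `R`-Dixmier over `𝕜`. -/
theorem relDixmier_of_baseChange_relDixmier
    {𝕜 A R K : Type*} [Field 𝕜] [CharZero 𝕜]
    [CommRing A] [IsDomain A] [Algebra 𝕜 A]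
    [CommRing R] [IsDomain R] [Algebra 𝕜 R]
    [Field K] [Algebra 𝕜 K]
    (PA : PoissonStructure 𝕜 A) (PR : PoissonStructure 𝕜 R)
    (PB : PoissonStructure K (A ⊗[𝕜] K))
    (hPB : ∀ (a a' : A) (s s' : K),
      PB.bracket (a ⊗ₜ[𝕜] s) (a' ⊗ₜ[𝕜] s') = PA.bracket a a' ⊗ₜ[𝕜] (s * s'))
    (PS : PoissonStructure K (R ⊗[𝕜] K))
    (hPS : ∀ (r r' : R) (s s' : K),
      PS.bracket (r ⊗ₜ[𝕜] s) (r' ⊗ₜ[𝕜] s') = PR.bracket r r' ⊗ₜ[𝕜] (s * s'))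
    (PBS : PoissonStructure K ((A ⊗[𝕜] K) ⊗[K] (R ⊗[𝕜] K)))
    (hPBS : IsTensorBracket PB PS PBS)
    (hB : ∀ g : (A ⊗[𝕜] K) →ₐ[K] (A ⊗[𝕜] K) ⊗[K] (R ⊗[𝕜] K),
      IsPoissonHom PB PBS g → Function.Injective g →
      Set.range g = Set.range fun b : A ⊗[𝕜] K => b ⊗ₜ[K] (1 : R ⊗[𝕜] K))
    (PAR : PoissonStructure 𝕜 (A ⊗[𝕜] R)) (hPAR : IsTensorBracket PA PR PAR) :
    IsRelDixmier 𝕜 A R PA PAR := by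
  intro f hf hfinj
  classical
  -- the base-changed morphism G : A ⊗ K → (A ⊗ K) ⊗[K] (R ⊗ K)
  let G : (A ⊗[𝕜] K) →ₐ[K] (A ⊗[𝕜] K) ⊗[K] (R ⊗[𝕜] K) :=
    extendRight 𝕜 K ((g0 𝕜 K A R).comp f)
  have hGtmul : ∀ (a : A) (s : K),
      G (a ⊗ₜ[𝕜] s) = g0 𝕜 K A R (f a) * algebraMap K _ s := fun _ _ => rfl
  -- key bracket computation
  have L : ∀ (s s' : K) (x y : A ⊗[𝕜] R),
      PBS.bracket (g0 𝕜 K A R x * algebraMap K _ s) (g0 𝕜 K A R y * algebraMap K _ s')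
        = g0 𝕜 K A R (PAR.bracket x y) * algebraMap K _ (s * s') := by
    intro s s' x y
    induction x using TensorProduct.induction_on with
    | zero => rw [PAR.zero_left, map_zero, zero_mul, zero_mul, PBS.zero_left]
    | add x₁ x₂ h1 h2 =>
        rw [map_add, add_mul, PBS.add_left, h1, h2, PAR.add_left, map_add, add_mul]
    | tmul a r =>
        induction y using TensorProduct.induction_on with
        | zero => rw [PAR.zero_right, map_zero, zero_mul, zero_mul, PBS.zero_right]
        | add y₁ y₂ h1 h2 =>
            rw [map_add, add_mul, PBS.add_right, h1, h2, PAR.add_right, map_add, add_mul]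
        | tmul a' r' =>
            rw [g0_tmul_mul, g0_tmul_mul, hPBS, hPB, hPS, hPAR, map_add, add_mul,
              g0_tmul_mul, g0_tmul_mul]
            simp [Algebra.TensorProduct.tmul_mul_tmul]
  -- G is a Poisson morphism
  have hGP : IsPoissonHom PB PBS G := by
    intro x y
    induction x using TensorProduct.induction_on with
    | zero => rw [PB.zero_left, map_zero, PBS.zero_left]
    | add x₁ x₂ h1 h2 => rw [PB.add_left, map_add, h1, h2, map_add, PBS.add_left]
    | tmul a s =>
        induction y using TensorProduct.induction_on with
        | zero => rw [PB.zero_right, map_zero, PBS.zero_right]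
        | add y₁ y₂ h1 h2 => rw [PB.add_right, map_add, h1, h2, map_add, PBS.add_right]
        | tmul a' s' =>
            rw [hPB, hGtmul, hGtmul, hGtmul, hf, L]
  -- composing with theta recovers the base change of f
  have hθg : ∀ x : A ⊗[𝕜] K,
      theta 𝕜 K A R (G x) = Algebra.TensorProduct.map f (AlgHom.id 𝕜 K) x := by
    intro x
    induction x using TensorProduct.induction_on with
    | zero => rw [map_zero, map_zero, map_zero]
    | tmul a s =>
        rw [hGtmul, map_mul, theta_g0, AlgHom.commutes, Algebra.TensorProduct.map_tmul,
          show (algebraMap K ((A ⊗[𝕜] R) ⊗[𝕜] K) s) = (1 : A ⊗[𝕜] R) ⊗ₜ[𝕜] s from rfl,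
          Algebra.TensorProduct.tmul_mul_tmul, mul_one, one_mul]
        rfl
    | add x y hx hy => rw [map_add, map_add, hx, hy, map_add]
  have hmap : ∀ x : A ⊗[𝕜] K,
      Algebra.TensorProduct.map f (AlgHom.id 𝕜 K) x
        = LinearMap.rTensor K f.toLinearMap x := by
    intro x
    induction x using TensorProduct.induction_on with
    | zero => rw [map_zero, map_zero]
    | tmul a s =>
        rw [Algebra.TensorProduct.map_tmul, LinearMap.rTensor_tmul, AlgHom.coe_id, id_eq,
          AlgHom.toLinearMap_apply]
    | add x y hx hy => rw [map_add, map_add, hx, hy]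
  have hrinj : Function.Injective (LinearMap.rTensor K f.toLinearMap) :=
    Module.Flat.rTensor_preserves_injective_linearMap f.toLinearMap hfinj
  have hGinj : Function.Injective G := by
    intro u v huv
    apply hrinj
    rw [← hmap, ← hmap, ← hθg, ← hθg, huv]
  have hrange := hB G hGP hGinj
  -- a linear retraction φ : K → 𝕜 with φ 1 = 1
  obtain ⟨φ, hφ⟩ := exists_phi 𝕜 K
  let qA : A ⊗[𝕜] K →ₗ[𝕜] A :=
    (TensorProduct.rid 𝕜 A).toLinearMap ∘ₗ LinearMap.lTensor A φ
  have hqA : ∀ (a : A) (s : K), qA (a ⊗ₜ[𝕜] s) = φ s • a := by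
    intro a s; simp [qA]
  let qC : (A ⊗[𝕜] R) ⊗[𝕜] K →ₗ[𝕜] A ⊗[𝕜] R :=
    (TensorProduct.rid 𝕜 (A ⊗[𝕜] R)).toLinearMap ∘ₗ LinearMap.lTensor (A ⊗[𝕜] R) φ
  have hqC : ∀ (x : A ⊗[𝕜] R) (s : K), qC (x ⊗ₜ[𝕜] s) = φ s • x := by
    intro x s; simp [qC]
  have key1 : ∀ b : A ⊗[𝕜] K,
      qC (theta 𝕜 K A R (b ⊗ₜ[K] (1 : R ⊗[𝕜] K))) = qA b ⊗ₜ[𝕜] (1 : R) := by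
    intro b
    induction b using TensorProduct.induction_on with
    | zero => rw [TensorProduct.zero_tmul, map_zero, map_zero, map_zero,
        TensorProduct.zero_tmul]
    | tmul a s =>
        rw [show (1 : R ⊗[𝕜] K) = (1 : R) ⊗ₜ[𝕜] (1 : K) from rfl, theta_tmul, mul_one,
          hqC, hqA, TensorProduct.smul_tmul']
    | add b₁ b₂ h1 h2 =>
        rw [TensorProduct.add_tmul, map_add, map_add, h1, h2, map_add,
          TensorProduct.add_tmul]
  have key2 : ∀ x : A ⊗[𝕜] K,
      qC (Algebra.TensorProduct.map f (AlgHom.id 𝕜 K) x) = f (qA x) := by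
    intro x
    induction x using TensorProduct.induction_on with
    | zero => rw [map_zero, map_zero, map_zero, map_zero]
    | tmul a s => rw [Algebra.TensorProduct.map_tmul, AlgHom.coe_id, id_eq, hqC, hqA,
        map_smul]
    | add x y hx hy => rw [map_add, map_add, hx, hy, map_add, map_add]
  apply Set.Subset.antisymm
  · rintro _ ⟨a, rfl⟩
    have hmem : g0 𝕜 K A R (f a) ∈ Set.range G := by
      refine ⟨a ⊗ₜ[𝕜] 1, ?_⟩
      rw [hGtmul, map_one, mul_one]
    rw [hrange] at hmem
    obtain ⟨b, hb⟩ := hmem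
    have h2 : theta 𝕜 K A R (b ⊗ₜ[K] (1 : R ⊗[𝕜] K))
        = theta 𝕜 K A R (g0 𝕜 K A R (f a)) := congrArg _ hb
    rw [theta_g0] at h2
    have h3 := congrArg qC h2
    rw [key1, hqC, hφ, one_smul] at h3
    exact ⟨qA b, h3⟩
  · rintro _ ⟨a, rfl⟩
    have hmem : ((a ⊗ₜ[𝕜] (1 : K)) ⊗ₜ[K] (1 : R ⊗[𝕜] K)) ∈ Set.range G := by
      rw [hrange]
      exact ⟨a ⊗ₜ[𝕜] (1 : K), rfl⟩
    obtain ⟨x, hx⟩ := hmem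
    have h2 := congrArg (theta 𝕜 K A R) hx
    rw [hθg] at h2
    have h4 : theta 𝕜 K A R ((a ⊗ₜ[𝕜] (1 : K)) ⊗ₜ[K] (1 : R ⊗[𝕜] K))
        = (a ⊗ₜ[𝕜] (1 : R)) ⊗ₜ[𝕜] (1 : K) := by
      rw [show (1 : R ⊗[𝕜] K) = (1 : R) ⊗ₜ[𝕜] (1 : K) from rfl, theta_tmul, one_mul]
    rw [h4] at h2
    have h3 := congrArg qC h2
    rw [key2, hqC, hφ, one_smul] at h3
    exact ⟨qA x, h3⟩
end

section
/- Let 𝕜 be an algebraically closed field of characteristic zero, and let A and B be Poisson 𝕜-algebras which are integral domains. Equip the fraction field Q(A) with the unique Poisson bracket extending that of A, and suppose that the Poisson center of Q(A) equals 𝕜. Then every nonzero Poisson ideal I of A ⊗_𝕜 B contains an element of the form a ⊗ b with a ∈ A∖{0} and b ∈ B∖{0}. -/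
open scoped TensorProduct

section PoissonHelpers

variable {𝕜 R : Type*} [CommRing 𝕜] [CommRing R] [Algebra 𝕜 R]

lemma PoissonStructure.zero_left_s13 (P : PoissonStructure 𝕜 R) (b : R) : P.bracket 0 b = 0 := by
  have h := P.add_left 0 0 b
  rw [add_zero] at h
  exact left_eq_add.mp h

lemma PoissonStructure.zero_right_s13 (P : PoissonStructure 𝕜 R) (a : R) : P.bracket a 0 = 0 := by
  rw [P.antisymm, P.zero_left_s13, neg_zero]

lemma PoissonStructure.add_right_s13 (P : PoissonStructure 𝕜 R) (a b c : R) :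
    P.bracket a (b + c) = P.bracket a b + P.bracket a c := by
  rw [P.antisymm, P.add_left, P.antisymm b a, P.antisymm c a]
  ring

lemma PoissonStructure.one_right (P : PoissonStructure 𝕜 R) (a : R) : P.bracket a 1 = 0 := by
  have h := P.leibniz a 1 1
  simp only [one_mul, mul_one] at h
  exact left_eq_add.mp h

lemma PoissonStructure.one_left (P : PoissonStructure 𝕜 R) (a : R) : P.bracket 1 a = 0 := by
  rw [P.antisymm, P.one_right, neg_zero]

lemma PoissonStructure.sum_right (P : PoissonStructure 𝕜 R) {ι : Type*} (a : R)
    (s : Finset ι) (f : ι → R) :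
    P.bracket a (∑ j ∈ s, f j) = ∑ j ∈ s, P.bracket a (f j) := by
  classical
  induction s using Finset.induction_on with
  | empty => simpa using P.zero_right_s13 a
  | insert _ _ h ih => rw [Finset.sum_insert h, Finset.sum_insert h, P.add_right_s13, ih]

end PoissonHelpers

/-- Lemma 3.1: if the Poisson center of `Q(A)` is `𝕜`, then every nonzero Poisson ideal of
`A ⊗ B` contains a nonzero pure tensor `a ⊗ b`. -/
theorem poissonIdeal_contains_pure_tensor
    {𝕜 A B : Type*} [Field 𝕜] [IsAlgClosed 𝕜] [CharZero 𝕜]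
    [CommRing A] [IsDomain A] [Algebra 𝕜 A]
    [CommRing B] [IsDomain B] [Algebra 𝕜 B]
    (PA : PoissonStructure 𝕜 A) (PB : PoissonStructure 𝕜 B)
    (PQ : PoissonStructure 𝕜 (FractionRing A))
    (hPQ : ∀ x y : A,
      PQ.bracket (algebraMap A (FractionRing A) x) (algebraMap A (FractionRing A) y) =
        algebraMap A (FractionRing A) (PA.bracket x y))
    (hcenter : ∀ q : FractionRing A, (∀ x, PQ.bracket q x = 0) →
      ∃ c : 𝕜, q = algebraMap 𝕜 (FractionRing A) c)
    (PT : PoissonStructure 𝕜 (A ⊗[𝕜] B)) (hPT : IsTensorBracket PA PB PT)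
    (I : Ideal (A ⊗[𝕜] B)) (hIpoisson : ∀ x : A ⊗[𝕜] B, ∀ y ∈ I, PT.bracket x y ∈ I)
    (hI : I ≠ ⊥) :
    ∃ a : A, a ≠ 0 ∧ ∃ b : B, b ≠ 0 ∧ a ⊗ₜ[𝕜] b ∈ I := by
    classical
  have hi : Function.Injective (algebraMap A (FractionRing A)) :=
    IsFractionRing.injective A (FractionRing A)
  -- Strengthened center hypothesis: enough to bracket-commute with images of A
  have hcenter' : ∀ q : FractionRing A,
      (∀ x : A, PQ.bracket q (algebraMap A (FractionRing A) x) = 0) →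
      ∃ c : 𝕜, q = algebraMap 𝕜 (FractionRing A) c := by
    intro q hq
    refine hcenter q fun z => ?_
    obtain ⟨x, y, hy, rfl⟩ := IsFractionRing.div_surjective (A := A) z
    have hy0 : algebraMap A (FractionRing A) y ≠ 0 := fun h =>
      nonZeroDivisors.ne_zero hy (hi (h.trans (map_zero _).symm))
    have hxz : (algebraMap A (FractionRing A) x / algebraMap A (FractionRing A) y) *
        algebraMap A (FractionRing A) y = algebraMap A (FractionRing A) x :=
      div_mul_cancel₀ _ hy0
    have h2 := PQ.leibniz q (algebraMap A (FractionRing A) x / algebraMap A (FractionRing A) y)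
        (algebraMap A (FractionRing A) y)
    rw [hxz, hq x, hq y, mul_zero, add_zero] at h2
    rcases mul_eq_zero.mp h2.symm with h | h
    · exact h
    · exact absurd h hy0
  set β := Module.Basis.ofVectorSpace 𝕜 B with hβ
  set 𝔅 := β.baseChange A with h𝔅
  -- expansion of any element in the base-changed basis
  have hexp : ∀ u : A ⊗[𝕜] B, u = ∑ j ∈ (𝔅.repr u).support, (𝔅.repr u j) ⊗ₜ[𝕜] β j := by
    intro u
    conv_lhs => rw [← 𝔅.linearCombination_repr u]
    rw [Finsupp.linearCombination_apply, Finsupp.sum]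
    refine Finset.sum_congr rfl fun j _ => ?_
    rw [h𝔅, Module.Basis.baseChange_apply, TensorProduct.smul_tmul', smul_eq_mul, mul_one]
  -- repr of a sum of pure tensors along the basis
  have hrepr : ∀ (s : Finset _) (d : _ → A),
      𝔅.repr (∑ j ∈ s, d j ⊗ₜ[𝕜] β j) = ∑ j ∈ s, Finsupp.single j (d j) := by
    intro s d
    rw [map_sum]
    refine Finset.sum_congr rfl fun j _ => ?_
    ext i'
    rw [h𝔅, Module.Basis.baseChange_repr_tmul, Module.Basis.repr_self]
    simp [Finsupp.single_apply]
  have heval : ∀ (s : Finset ↑(Module.Basis.ofVectorSpaceIndex 𝕜 B))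
      (d : ↑(Module.Basis.ofVectorSpaceIndex 𝕜 B) → A) (j' : ↑(Module.Basis.ofVectorSpaceIndex 𝕜 B)),
      (∑ j ∈ s, Finsupp.single j (d j)) j' = if j' ∈ s then d j' else 0 := by
    intro s d j'
    rw [Finset.sum_apply']
    by_cases h : j' ∈ s
    · rw [if_pos h, Finset.sum_eq_single_of_mem j' h]
      · simp
      · intro j _ hne; exact Finsupp.single_eq_of_ne hne.symm
    · rw [if_neg h]
      exact Finset.sum_eq_zero fun j hj => Finsupp.single_eq_of_ne (fun e => h (e ▸ hj))
  suffices H : (∀ n : ℕ, ∀ t : A ⊗[𝕜] B, t ∈ I → t ≠ 0 → (𝔅.repr t).support.card ≤ n →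
      ∃ a : A, a ≠ 0 ∧ ∃ b : B, b ≠ 0 ∧ a ⊗ₜ[𝕜] b ∈ I) by
    rw [Submodule.ne_bot_iff] at hI
    obtain ⟨t, htI, ht0⟩ := hI
    exact H _ t htI ht0 le_rfl
  intro n
  induction n with
  | zero =>
    intro t htI ht0 hcard
    exfalso
    apply ht0
    have h1 : (𝔅.repr t).support = ∅ := Finset.card_eq_zero.mp (Nat.le_zero.mp hcard)
    have h2 : 𝔅.repr t = 0 := Finsupp.support_eq_empty.mp h1
    exact (LinearEquiv.map_eq_zero_iff 𝔅.repr).mp h2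
  | succ n ih =>
    intro t htI ht0 hcard
    set c : _ →₀ A := 𝔅.repr t with hc
    set s := c.support with hs
    have hsne : s.Nonempty := by
      rw [hs, Finsupp.support_nonempty_iff, hc]
      intro h
      exact ht0 ((LinearEquiv.map_eq_zero_iff 𝔅.repr).mp h)
    obtain ⟨i0, hi0⟩ := hsne
    have hci0 : c i0 ≠ 0 := Finsupp.mem_support_iff.mp hi0
    have ht : t = ∑ j ∈ s, (c j) ⊗ₜ[𝕜] β j := hexp t
    -- the shortening elements
    have htxI : ∀ x : A,
        (∑ j ∈ s, (c i0 * PA.bracket x (c j) - PA.bracket x (c i0) * c j) ⊗ₜ[𝕜] β j) ∈ I := by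
      intro x
      have hbr : PT.bracket (x ⊗ₜ[𝕜] (1 : B)) t = ∑ j ∈ s, (PA.bracket x (c j)) ⊗ₜ[𝕜] β j := by
        conv_lhs => rw [ht]
        rw [PT.sum_right]
        refine Finset.sum_congr rfl fun j _ => ?_
        rw [hPT, PB.one_left, one_mul, TensorProduct.tmul_zero, add_zero]
      have key : (∑ j ∈ s, (c i0 * PA.bracket x (c j) - PA.bracket x (c i0) * c j) ⊗ₜ[𝕜] β j)
          = (c i0 ⊗ₜ[𝕜] (1 : B)) * PT.bracket (x ⊗ₜ[𝕜] (1 : B)) t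
            - (PA.bracket x (c i0) ⊗ₜ[𝕜] (1 : B)) * t := by
        rw [hbr]
        conv_rhs => rw [ht]
        rw [Finset.mul_sum, Finset.mul_sum, ← Finset.sum_sub_distrib]
        refine Finset.sum_congr rfl fun j _ => ?_
        rw [Algebra.TensorProduct.tmul_mul_tmul, Algebra.TensorProduct.tmul_mul_tmul,
          one_mul, TensorProduct.sub_tmul]
      rw [key]
      exact I.sub_mem (I.mul_mem_left _ (hIpoisson _ t htI)) (I.mul_mem_left _ htI)
    by_cases hall : ∀ x : A,
        (∑ j ∈ s, (c i0 * PA.bracket x (c j) - PA.bracket x (c i0) * c j) ⊗ₜ[𝕜] β j) = 0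
    · -- central case: all coefficients are scalar multiples of c i0
      have hdd : ∀ (x : A), ∀ j ∈ s, c i0 * PA.bracket x (c j) = PA.bracket x (c i0) * c j := by
        intro x j hj
        have h1 : (𝔅.repr (∑ j ∈ s,
            (c i0 * PA.bracket x (c j) - PA.bracket x (c i0) * c j) ⊗ₜ[𝕜] β j)) j = 0 := by
          rw [hall x]; simp
        rw [hrepr, heval, if_pos hj] at h1
        exact sub_eq_zero.mp h1
      have hq : ∀ j ∈ s, ∃ e : 𝕜, c j = algebraMap 𝕜 A e * c i0 := by
        intro j hj
        have hci0Q : algebraMap A (FractionRing A) (c i0) ≠ 0 := fun h =>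
          hci0 (hi (h.trans (map_zero _).symm))
        set q : FractionRing A :=
          algebraMap A (FractionRing A) (c j) / algebraMap A (FractionRing A) (c i0) with hqdef
        have hqm : q * algebraMap A (FractionRing A) (c i0) =
            algebraMap A (FractionRing A) (c j) := div_mul_cancel₀ _ hci0Q
        have hqc : ∀ x : A, PQ.bracket q (algebraMap A (FractionRing A) x) = 0 := by
          intro x
          have hrel := hdd x j hj
          have hL := PQ.leibniz (algebraMap A (FractionRing A) x) q
            (algebraMap A (FractionRing A) (c i0))
          rw [hqm, hPQ, hPQ] at hL
          have e1 : algebraMap A (FractionRing A) (c i0) *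
                algebraMap A (FractionRing A) (PA.bracket x (c j)) =
              algebraMap A (FractionRing A) (PA.bracket x (c i0)) *
                algebraMap A (FractionRing A) (c j) := by
            rw [← map_mul, ← map_mul, hrel]
          have h2 : PQ.bracket (algebraMap A (FractionRing A) x) q *
              (algebraMap A (FractionRing A) (c i0) * algebraMap A (FractionRing A) (c i0)) = 0 := by
            calc PQ.bracket (algebraMap A (FractionRing A) x) q *
                (algebraMap A (FractionRing A) (c i0) * algebraMap A (FractionRing A) (c i0))
                = algebraMap A (FractionRing A) (c i0) *
                    (PQ.bracket (algebraMap A (FractionRing A) x) q *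
                      algebraMap A (FractionRing A) (c i0) +
                    q * PQ.bracket (algebraMap A (FractionRing A) x)
                      (algebraMap A (FractionRing A) (c i0)))
                  - (q * algebraMap A (FractionRing A) (c i0)) *
                    PQ.bracket (algebraMap A (FractionRing A) x)
                      (algebraMap A (FractionRing A) (c i0)) := by ring
              _ = 0 := by rw [hPQ, ← hL, hqm, e1]; ring
          have h3 : PQ.bracket (algebraMap A (FractionRing A) x) q = 0 := by
            rcases mul_eq_zero.mp h2 with h | h
            · exact h
            · exact absurd (mul_self_eq_zero.mp h) hci0Q
          rw [PQ.antisymm, h3, neg_zero]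
        obtain ⟨e, he⟩ := hcenter' q hqc
        refine ⟨e, hi ?_⟩
        rw [← hqm, he, map_mul, IsScalarTower.algebraMap_apply 𝕜 A (FractionRing A)]
      have hq' : ∀ j, ∃ e : 𝕜, j ∈ s → c j = algebraMap 𝕜 A e * c i0 := by
        intro j
        by_cases hj : j ∈ s
        · obtain ⟨e, he⟩ := hq j hj; exact ⟨e, fun _ => he⟩
        · exact ⟨0, fun h => absurd h hj⟩
      choose e he using hq'
      have htfinal : t = c i0 ⊗ₜ[𝕜] (∑ j ∈ s, e j • β j) := by
        rw [ht, TensorProduct.tmul_sum]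
        refine Finset.sum_congr rfl fun j hj => ?_
        rw [he j hj, ← Algebra.smul_def, TensorProduct.smul_tmul]
      exact ⟨c i0, hci0, ∑ j ∈ s, e j • β j,
        fun hb0 => ht0 (by rw [htfinal, hb0, TensorProduct.tmul_zero]),
        by rw [← htfinal]; exact htI⟩
    · -- shortening case: apply the induction hypothesis
      push_neg at hall
      obtain ⟨x, hx⟩ := hall
      set u := ∑ j ∈ s, (c i0 * PA.bracket x (c j) - PA.bracket x (c i0) * c j) ⊗ₜ[𝕜] β j with hu
      have hsupp : (𝔅.repr u).support ⊆ s.erase i0 := by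
        intro j' hj'
        have hval := Finsupp.mem_support_iff.mp hj'
        rw [hu, hrepr, heval] at hval
        by_cases hj's : j' ∈ s
        · rw [if_pos hj's] at hval
          rw [Finset.mem_erase]
          refine ⟨?_, hj's⟩
          intro hji
          apply hval
          rw [hji]
          ring
        · rw [if_neg hj's] at hval
          exact absurd rfl hval
      have hcardu : (𝔅.repr u).support.card ≤ n := by
        have h1 := Finset.card_le_card hsupp
        rw [Finset.card_erase_of_mem hi0] at h1
        have h2 : s.card ≤ n + 1 := hcard
        omega
      exact ih u (htxI x) hx hcardu
end

section
/- Let 𝕜 be an algebraically closed field of characteristic zero. Let S and A be Poisson 𝕜-algebras which are integral domains, both Poisson simple, and suppose that the Poisson center of the fraction field Q(A) (with the unique Poisson bracket extending that of A) equals 𝕜. Then S ⊗_𝕜 A is Poisson simple. -/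
open scoped TensorProduct

/-! ### Auxiliary lemmas (added for the proof) -/

namespace PoissonStructure

variable {𝕜 A : Type*} [CommRing 𝕜] [CommRing A] [Algebra 𝕜 A] (P : PoissonStructure 𝕜 A)

lemma bracket_add_right (a b c : A) :
    P.bracket a (b + c) = P.bracket a b + P.bracket a c := by
  rw [P.antisymm a (b + c), P.add_left, P.antisymm b a, P.antisymm c a]
  ring

lemma bracket_smul_right (r : 𝕜) (a b : A) :
    P.bracket a (r • b) = r • P.bracket a b := by
  rw [P.antisymm a (r • b), P.smul_left, P.antisymm b a, smul_neg, neg_neg]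

lemma bracket_zero_right (a : A) : P.bracket a 0 = 0 := by
  have h := P.bracket_add_right a 0 0
  rw [add_zero] at h
  exact (left_eq_add.mp h)

lemma bracket_zero_left (a : A) : P.bracket 0 a = 0 := by
  rw [P.antisymm, P.bracket_zero_right, neg_zero]

lemma bracket_one_right (a : A) : P.bracket a 1 = 0 := by
  have h := P.leibniz a 1 1
  rw [mul_one, mul_one, one_mul] at h
  exact (left_eq_add.mp h)

lemma bracket_one_left (a : A) : P.bracket 1 a = 0 := by
  rw [P.antisymm, P.bracket_one_right, neg_zero]

end PoissonStructure

section TensorCoord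

variable (𝕜 S A : Type*) [Field 𝕜] [AddCommGroup S] [Module 𝕜 S]
  [AddCommGroup A] [Module 𝕜 A]

/-- Coordinates of `S ⊗ A` with respect to a basis of `S`. -/
noncomputable def tcoord :
    S ⊗[𝕜] A ≃ₗ[𝕜] (Module.Basis.ofVectorSpaceIndex 𝕜 S →₀ A) :=
  letI := Classical.decEq (Module.Basis.ofVectorSpaceIndex 𝕜 S)
  (TensorProduct.congr (Module.Basis.ofVectorSpace 𝕜 S).repr (LinearEquiv.refl 𝕜 A)).trans
    (TensorProduct.finsuppScalarLeft 𝕜 A _)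

variable {𝕜 S A}

lemma tcoord_tmul (s : S) (a : A) (i) :
    tcoord 𝕜 S A (s ⊗ₜ[𝕜] a) i = (Module.Basis.ofVectorSpace 𝕜 S).repr s i • a := by
  classical
  simp [tcoord]

lemma tcoord_recon (y : S ⊗[𝕜] A) :
    ∑ i ∈ (tcoord 𝕜 S A y).support,
      (Module.Basis.ofVectorSpace 𝕜 S) i ⊗ₜ[𝕜] (tcoord 𝕜 S A y i) = y := by
  classical
  apply (tcoord 𝕜 S A).injective
  rw [map_sum]
  ext j
  rw [Finsupp.finset_sum_apply]
  simp only [tcoord_tmul, Module.Basis.repr_self, Finsupp.single_apply, ite_smul, one_smul, zero_smul]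
  rw [Finset.sum_ite_eq' ((tcoord 𝕜 S A y).support) j (fun i => tcoord 𝕜 S A y i)]
  by_cases hj : j ∈ (tcoord 𝕜 S A y).support
  · simp [hj]
  · simp [hj, Finsupp.notMem_support_iff.mp hj]

end TensorCoord

set_option maxHeartbeats 2000000 in
/-- Lemma 3.2(1): if `S` and `A` are Poisson simple domains and the Poisson center of `Q(A)`
is `𝕜`, then `S ⊗ A` is Poisson simple. -/
theorem tensor_poissonSimple_of_poissonSimple
    {𝕜 S A : Type*} [Field 𝕜] [IsAlgClosed 𝕜] [CharZero 𝕜]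
    [CommRing S] [IsDomain S] [Algebra 𝕜 S]
    [CommRing A] [IsDomain A] [Algebra 𝕜 A]
    (PS : PoissonStructure 𝕜 S) (PA : PoissonStructure 𝕜 A)
    (hSsimple : IsPoissonSimple PS) (hAsimple : IsPoissonSimple PA)
    (PQ : PoissonStructure 𝕜 (FractionRing A))
    (hPQ : ∀ x y : A,
      PQ.bracket (algebraMap A (FractionRing A) x) (algebraMap A (FractionRing A) y) =
        algebraMap A (FractionRing A) (PA.bracket x y))
    (hcenter : ∀ q : FractionRing A, (∀ x, PQ.bracket q x = 0) →
      ∃ c : 𝕜, q = algebraMap 𝕜 (FractionRing A) c)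
    (PT : PoissonStructure 𝕜 (S ⊗[𝕜] A)) (hPT : IsTensorBracket PS PA PT) :
    IsPoissonSimple PT := by
  classical
  intro I hI
  by_cases hbot : I = ⊥
  · exact Or.inl hbot
  right
  set e := tcoord 𝕜 S A with he
  set b := Module.Basis.ofVectorSpace 𝕜 S with hb
  -- coordinate computation for multiplication by `1 ⊗ a`
  have hmul : ∀ (a : A) (y : S ⊗[𝕜] A) i, e ((1 ⊗ₜ[𝕜] a) * y) i = a * e y i := by
    intro a y
    induction y using TensorProduct.induction_on with
    | zero => intro i; simp
    | tmul s c =>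
        intro i
        rw [Algebra.TensorProduct.tmul_mul_tmul, one_mul]
        rw [he, tcoord_tmul, tcoord_tmul, mul_smul_comm]
    | add u v hu hv =>
        intro i
        rw [mul_add, map_add, Finsupp.add_apply, hu, hv, map_add, Finsupp.add_apply, mul_add]
  -- coordinate computation for bracketing with `1 ⊗ a`
  have hbra : ∀ (a : A) (y : S ⊗[𝕜] A) i,
      e (PT.bracket (1 ⊗ₜ[𝕜] a) y) i = PA.bracket a (e y i) := by
    intro a y
    induction y using TensorProduct.induction_on with
    | zero => intro i; rw [PT.bracket_zero_right]; simp [PA.bracket_zero_right]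
    | tmul s c =>
        intro i
        rw [hPT 1 s a c, PS.bracket_one_left, TensorProduct.zero_tmul, zero_add, one_mul]
        rw [he, tcoord_tmul, tcoord_tmul, PA.bracket_smul_right]
    | add u v hu hv =>
        intro i
        rw [PT.bracket_add_right, map_add, Finsupp.add_apply, hu, hv,
          map_add, Finsupp.add_apply, PA.bracket_add_right]
  -- pick a nonzero element of `I` with minimal support
  obtain ⟨x0, hx0I, hx0⟩ := (Submodule.ne_bot_iff I).mp hbot
  have hSne : {k : ℕ | ∃ y, y ∈ I ∧ y ≠ 0 ∧ (e y).support.card = k}.Nonempty :=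
    ⟨_, x0, hx0I, hx0, rfl⟩
  obtain ⟨x, hxI, hxne, hcard⟩ := Nat.sInf_mem hSne
  have hmin : ∀ y, y ∈ I → y ≠ 0 → (e x).support.card ≤ (e y).support.card := by
    intro y hy hy0
    rw [hcard]
    exact Nat.sInf_le ⟨y, hy, hy0, rfl⟩
  have hex : e x ≠ 0 := fun h => hxne (by simpa using e.map_eq_zero_iff.mp h)
  obtain ⟨i₀, hi₀⟩ := Finsupp.support_nonempty_iff.mpr hex
  set a₀ := e x i₀ with ha₀def
  have ha₀ : a₀ ≠ 0 := Finsupp.mem_support_iff.mp hi₀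
  -- key relation
  have hkey : ∀ (a : A) i, a₀ * PA.bracket a (e x i) = PA.bracket a a₀ * e x i := by
    intro a i
    set y := (1 ⊗ₜ[𝕜] a₀) * PT.bracket (1 ⊗ₜ[𝕜] a) x
      - (1 ⊗ₜ[𝕜] PA.bracket a a₀) * x with hydef
    have hyI : y ∈ I :=
      I.sub_mem (I.mul_mem_left _ (hI _ _ hxI)) (I.mul_mem_left _ hxI)
    have hey : ∀ j, e y j = a₀ * PA.bracket a (e x j) - PA.bracket a a₀ * e x j := by
      intro j
      rw [hydef, map_sub, Finsupp.sub_apply, hmul, hbra, hmul]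
    have hsupp : (e y).support ⊆ (e x).support.erase i₀ := by
      intro j hj
      rw [Finsupp.mem_support_iff] at hj
      rw [Finset.mem_erase]
      constructor
      · rintro rfl
        exact hj (by rw [hey, ← ha₀def, mul_comm, sub_self])
      · rw [Finsupp.mem_support_iff]
        intro h0
        exact hj (by rw [hey, h0, PA.bracket_zero_right, mul_zero, mul_zero, sub_self])
    have hy0 : y = 0 := by
      by_contra h
      have h1 := hmin y hyI h
      have h2 : (e y).support.card ≤ ((e x).support.erase i₀).card :=
        Finset.card_le_card hsupp
      rw [Finset.card_erase_of_mem hi₀] at h2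
      have h3 : 0 < (e x).support.card := Finset.card_pos.mpr ⟨i₀, hi₀⟩
      omega
    have := hey i
    rw [hy0, map_zero, Finsupp.zero_apply] at this
    exact (sub_eq_zero.mp this.symm)
  -- pass to the fraction field
  have hinj : Function.Injective (algebraMap A (FractionRing A)) :=
    IsFractionRing.injective A (FractionRing A)
  have hα : algebraMap A (FractionRing A) a₀ ≠ 0 :=
    fun h => ha₀ (hinj (by rw [h, map_zero]))
  have hC : ∀ i, i ∈ (e x).support → ∃ c : 𝕜, e x i = c • a₀ := by
    intro i _
    set ι' := algebraMap A (FractionRing A) with hι'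
    set q : FractionRing A := ι' (e x i) / ι' a₀ with hq
    have hqβ : ι' (e x i) = q * ι' a₀ := (div_mul_cancel₀ _ hα).symm
    have hqa : ∀ a : A, PQ.bracket (ι' a) q = 0 := by
      intro a
      have h1 : ι' a₀ * PQ.bracket (ι' a) (ι' (e x i))
          = PQ.bracket (ι' a) (ι' a₀) * ι' (e x i) := by
        rw [hPQ, hPQ, ← map_mul, ← map_mul, hkey a i]
      rw [hqβ, PQ.leibniz] at h1
      have h2 : PQ.bracket (ι' a) q * (ι' a₀ * ι' a₀) = 0 := by linear_combination h1
      exact (mul_eq_zero.mp h2).resolve_right (mul_ne_zero hα hα)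
    have hqall : ∀ z : FractionRing A, PQ.bracket q z = 0 := by
      intro z
      obtain ⟨nn, dd, hdd, hz⟩ := IsFractionRing.div_surjective (A := A) z
      have hd0 : ι' dd ≠ 0 :=
        fun h => nonZeroDivisors.ne_zero hdd (hinj (by rw [h, map_zero]))
      have h1 : PQ.bracket q (z * ι' dd) = PQ.bracket q (ι' nn) := by
        rw [← hz, div_mul_cancel₀ _ hd0]
      have h2 : PQ.bracket q (ι' nn) = 0 := by
        rw [PQ.antisymm, hqa nn, neg_zero]
      have h3 : PQ.bracket q (ι' dd) = 0 := by
        rw [PQ.antisymm, hqa dd, neg_zero]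
      rw [PQ.leibniz, h3, mul_zero, add_zero, h2] at h1
      exact (mul_eq_zero.mp h1).resolve_right hd0
    obtain ⟨c, hc⟩ := hcenter q hqall
    refine ⟨c, hinj ?_⟩
    rw [Algebra.smul_def, map_mul, ← IsScalarTower.algebraMap_apply 𝕜 A (FractionRing A),
      ← hc]
    exact hqβ
  choose cfun hcfun using hC
  set c : (Module.Basis.ofVectorSpaceIndex 𝕜 S) → 𝕜 :=
    fun i => if h : i ∈ (e x).support then cfun i h else 0 with hcdef
  have hc : ∀ i ∈ (e x).support, e x i = c i • a₀ := by
    intro i hi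
    rw [hcdef]
    simp only [hi, dif_pos]
    exact hcfun i hi
  set s₀ : S := ∑ i ∈ (e x).support, c i • b i with hs₀def
  have hx_eq : s₀ ⊗ₜ[𝕜] a₀ = x := by
    conv_rhs => rw [← tcoord_recon (𝕜 := 𝕜) (S := S) (A := A) x]
    rw [← he, ← hb, hs₀def, TensorProduct.sum_tmul]
    apply Finset.sum_congr rfl
    intro i hi
    rw [hc i hi, TensorProduct.tmul_smul, TensorProduct.smul_tmul']
  have hs₀ : s₀ ≠ 0 := by
    intro h
    apply hxne
    rw [← hx_eq, h, TensorProduct.zero_tmul]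
  -- the ideal of `A`-components
  set K : Ideal A :=
    { carrier := {a : A | s₀ ⊗ₜ[𝕜] a ∈ I}
      add_mem' := fun {u v} hu hv => by
        show s₀ ⊗ₜ[𝕜] (u + v) ∈ I
        rw [TensorProduct.tmul_add]
        exact I.add_mem hu hv
      zero_mem' := by
        show s₀ ⊗ₜ[𝕜] (0 : A) ∈ I
        rw [TensorProduct.tmul_zero]
        exact I.zero_mem
      smul_mem' := fun r a ha => by
        show s₀ ⊗ₜ[𝕜] (r • a) ∈ I
        have h := I.mul_mem_left (1 ⊗ₜ[𝕜] r) ha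
        rw [Algebra.TensorProduct.tmul_mul_tmul, one_mul] at h
        simpa [smul_eq_mul] using h } with hKdef
  have hKP : ∀ u : A, ∀ a ∈ K, PA.bracket u a ∈ K := by
    intro u a ha
    show s₀ ⊗ₜ[𝕜] PA.bracket u a ∈ I
    have h := hI (1 ⊗ₜ[𝕜] u) _ ha
    rwa [hPT 1 s₀ u a, PS.bracket_one_left, TensorProduct.zero_tmul, zero_add, one_mul] at h
  have hKtop : K = ⊤ := by
    refine (hAsimple K hKP).resolve_left (fun h => ha₀ ?_)
    have ha₀K : a₀ ∈ K := by
      show s₀ ⊗ₜ[𝕜] a₀ ∈ I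
      rw [hx_eq]; exact hxI
    rw [h] at ha₀K
    exact (Submodule.mem_bot A).mp ha₀K
  have hs₀1 : s₀ ⊗ₜ[𝕜] (1 : A) ∈ I := by
    have : (1 : A) ∈ K := by rw [hKtop]; trivial
    exact this
  -- the ideal of `S`-components
  set L : Ideal S :=
    { carrier := {s : S | s ⊗ₜ[𝕜] (1 : A) ∈ I}
      add_mem' := fun {u v} hu hv => by
        show (u + v) ⊗ₜ[𝕜] (1 : A) ∈ I
        rw [TensorProduct.add_tmul]
        exact I.add_mem hu hv
      zero_mem' := by
        show (0 : S) ⊗ₜ[𝕜] (1 : A) ∈ I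
        rw [TensorProduct.zero_tmul]
        exact I.zero_mem
      smul_mem' := fun r s hs => by
        show (r • s) ⊗ₜ[𝕜] (1 : A) ∈ I
        have h := I.mul_mem_left (r ⊗ₜ[𝕜] (1 : A)) hs
        rw [Algebra.TensorProduct.tmul_mul_tmul, one_mul] at h
        simpa [smul_eq_mul] using h } with hLdef
  have hLP : ∀ u : S, ∀ s ∈ L, PS.bracket u s ∈ L := by
    intro u s hs
    show PS.bracket u s ⊗ₜ[𝕜] (1 : A) ∈ I
    have h := hI (u ⊗ₜ[𝕜] (1 : A)) _ hs
    rwa [hPT u s 1 1, PA.bracket_one_right, TensorProduct.tmul_zero, add_zero, one_mul] at h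
  have hLtop : L = ⊤ := by
    refine (hSsimple L hLP).resolve_left (fun h => hs₀ ?_)
    have : s₀ ∈ L := hs₀1
    rw [h] at this
    exact (Submodule.mem_bot S).mp this
  have h1 : (1 : S) ⊗ₜ[𝕜] (1 : A) ∈ I := by
    have : (1 : S) ∈ L := by rw [hLtop]; trivial
    exact this
  rw [Ideal.eq_top_iff_one]
  rwa [Algebra.TensorProduct.one_def]
end
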